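/- arXiv:2512.11540 — 6 statements merged into one kernel-verified Lean document; each statement's English description precedes it below -/
import Mathlib

section
/- Let k be a field of characteristic zero, (A, ∗) a Zinbiel algebra over k and (B, ⋄) a perm algebra over k. Then the tensor product A ⊗ B equipped with the induced product · is a commutative associative (non-unital) k-algebra. -/
/-!
On pure tensors `xᵢ = aᵢ ⊗ bᵢ`, the perm identities and the Zinbiel identity
`a₁ ∗ (a₂ ∗ a₃) = (a₁ ∗ a₂ + a₂ ∗ a₁) ∗ a₃` collapse `(x₁ · x₂) · x₃` to
`T(1,2;3) + T(1,3;2) + T(2,3;1)` with `T(i,j;l) = aᵢ ∗ (aⱼ ∗ aₗ) ⊗ (bᵢ ⋄ bⱼ) ⋄ bₗ`,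
which is symmetric in `i, j`. This sum is symmetric in `1, 2, 3`, so by commutativity
`x₁ · (x₂ · x₃) = (x₂ · x₃) · x₁` is the same sum.
-/

open TensorProduct

noncomputable section

def IsZinbiel {k A : Type} [Field k] [AddCommGroup A] [Module k A]
    (ast : A →ₗ[k] A →ₗ[k] A) : Prop :=
  ∀ a₁ a₂ a₃ : A, ast a₁ (ast a₂ a₃) = ast (ast a₁ a₂) a₃ + ast (ast a₂ a₁) a₃

def IsPreLie {k A : Type} [Field k] [AddCommGroup A] [Module k A]
    (circ : A →ₗ[k] A →ₗ[k] A) : Prop :=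
  ∀ a₁ a₂ a₃ : A,
    circ (circ a₁ a₂) a₃ - circ a₁ (circ a₂ a₃)
      = circ (circ a₂ a₁) a₃ - circ a₂ (circ a₁ a₃)

def IsPerm {k B : Type} [Field k] [AddCommGroup B] [Module k B]
    (dia : B →ₗ[k] B →ₗ[k] B) : Prop :=
  ∀ b₁ b₂ b₃ : B,
    dia b₁ (dia b₂ b₃) = dia (dia b₁ b₂) b₃ ∧
    dia (dia b₁ b₂) b₃ = dia (dia b₂ b₁) b₃

def IsPrePoisson {k A : Type} [Field k] [AddCommGroup A] [Module k A]
    (ast circ : A →ₗ[k] A →ₗ[k] A) : Prop :=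
  IsZinbiel ast ∧ IsPreLie circ ∧
  (∀ a₁ a₂ a₃ : A,
    ast (circ a₁ a₂ - circ a₂ a₁) a₃ = circ a₁ (ast a₂ a₃) - ast a₂ (circ a₁ a₃)) ∧
  (∀ a₁ a₂ a₃ : A,
    circ (ast a₁ a₂ + ast a₂ a₁) a₃ = ast a₁ (circ a₂ a₃) + ast a₂ (circ a₁ a₃))

def IsPoisson {k P : Type} [Field k] [AddCommGroup P] [Module k P]
    (mul br : P →ₗ[k] P →ₗ[k] P) : Prop :=
  (∀ u v : P, mul u v = mul v u) ∧
  (∀ u v w : P, mul (mul u v) w = mul u (mul v w)) ∧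
  (∀ u v : P, br u v = - br v u) ∧
  (∀ u v w : P, br (br u v) w + br (br v w) u + br (br w u) v = 0) ∧
  (∀ u v w : P, br u (mul v w) = mul (br u v) w + mul v (br u w))

def idm (k M : Type) [Field k] [AddCommGroup M] [Module k M] : M →ₗ[k] M :=
  LinearMap.id

def tau (k M : Type) [Field k] [AddCommGroup M] [Module k M] :
    M ⊗[k] M →ₗ[k] M ⊗[k] M :=
  (TensorProduct.comm k M M).toLinearMap

def unassoc (k M : Type) [Field k] [AddCommGroup M] [Module k M] :
    M ⊗[k] (M ⊗[k] M) →ₗ[k] (M ⊗[k] M) ⊗[k] M :=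
  (TensorProduct.assoc k M M M).symm.toLinearMap

def intch (k A B : Type) [Field k] [AddCommGroup A] [Module k A]
    [AddCommGroup B] [Module k B] :
    (A ⊗[k] A) ⊗[k] (B ⊗[k] B) →ₗ[k] (A ⊗[k] B) ⊗[k] (A ⊗[k] B) :=
  (TensorProduct.tensorTensorTensorComm k A A B B).toLinearMap

def IsZinbielCo {k A : Type} [Field k] [AddCommGroup A] [Module k A]
    (ϑ : A →ₗ[k] A ⊗[k] A) : Prop :=
  ∀ a : A,
    TensorProduct.map ϑ (idm k A) (ϑ a)
      + TensorProduct.map (tau k A) (idm k A) (TensorProduct.map ϑ (idm k A) (ϑ a))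
    = unassoc k A (TensorProduct.map (idm k A) ϑ (ϑ a))

def IsPermCo {k B : Type} [Field k] [AddCommGroup B] [Module k B]
    (ν : B →ₗ[k] B ⊗[k] B) : Prop :=
  ∀ b : B,
    TensorProduct.map ν (idm k B) (ν b)
      = unassoc k B (TensorProduct.map (idm k B) ν (ν b)) ∧
    TensorProduct.map ν (idm k B) (ν b)
      = TensorProduct.map (tau k B) (idm k B) (TensorProduct.map ν (idm k B) (ν b))

def IsPreLieCo {k A : Type} [Field k] [AddCommGroup A] [Module k A]
    (θ : A →ₗ[k] A ⊗[k] A) : Prop :=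
  ∀ a : A,
    unassoc k A (TensorProduct.map (idm k A) θ (θ a))
      - TensorProduct.map (tau k A) (idm k A)
          (unassoc k A (TensorProduct.map (idm k A) θ (θ a)))
    = TensorProduct.map θ (idm k A) (θ a)
      - TensorProduct.map (tau k A) (idm k A) (TensorProduct.map θ (idm k A) (θ a))

def Zexp {k A : Type} [Field k] [AddCommGroup A] [Module k A]
    (ast : A →ₗ[k] A →ₗ[k] A) {p : ℕ} (x y : Fin p → A) : (A ⊗[k] A) ⊗[k] A :=
  ∑ i : Fin p, ∑ j : Fin p,
    (((ast (x i) (x j)) ⊗ₜ[k] (y j)) ⊗ₜ[k] (y i)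
      + ((y j) ⊗ₜ[k] (ast (x i) (x j))) ⊗ₜ[k] (y i)
      + ((x i) ⊗ₜ[k] (x j)) ⊗ₜ[k] (ast (y i) (y j))
      + ((x j) ⊗ₜ[k] (x i)) ⊗ₜ[k] (ast (y i) (y j))
      - ((x i) ⊗ₜ[k] (ast (y i) (x j))) ⊗ₜ[k] (y j)
      - ((x j) ⊗ₜ[k] (ast (x i) (y j))) ⊗ₜ[k] (y i)
      - ((ast (x i) (y j)) ⊗ₜ[k] (x j)) ⊗ₜ[k] (y i)
      - ((ast (y i) (x j)) ⊗ₜ[k] (x i)) ⊗ₜ[k] (y j))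

def PLexp {k A : Type} [Field k] [AddCommGroup A] [Module k A]
    (circ : A →ₗ[k] A →ₗ[k] A) {p : ℕ} (x y : Fin p → A) : (A ⊗[k] A) ⊗[k] A :=
  ∑ i : Fin p, ∑ j : Fin p,
    (((circ (x i) (x j)) ⊗ₜ[k] (y j)) ⊗ₜ[k] (y i)
      + ((x j) ⊗ₜ[k] (circ (x i) (y j))) ⊗ₜ[k] (y i)
      + ((circ (y i) (x j)) ⊗ₜ[k] (x i)) ⊗ₜ[k] (y j)
      + ((x j) ⊗ₜ[k] (x i)) ⊗ₜ[k] (circ (y i) (y j))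
      - ((y j) ⊗ₜ[k] (circ (x i) (x j))) ⊗ₜ[k] (y i)
      - ((x i) ⊗ₜ[k] (circ (y i) (x j))) ⊗ₜ[k] (y j)
      - ((circ (x i) (y j)) ⊗ₜ[k] (x j)) ⊗ₜ[k] (y i)
      - ((x i) ⊗ₜ[k] (x j)) ⊗ₜ[k] (circ (y i) (y j)))

def AYexp {k P : Type} [Field k] [AddCommGroup P] [Module k P]
    (m : P →ₗ[k] P →ₗ[k] P) {ι : Type} [Fintype ι] (u v : ι → P) :
    (P ⊗[k] P) ⊗[k] P :=
  ∑ α : ι, ∑ β : ι,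
    (((m (u α) (u β)) ⊗ₜ[k] (v α)) ⊗ₜ[k] (v β)
      + ((u α) ⊗ₜ[k] (m (v α) (u β))) ⊗ₜ[k] (v β)
      - ((u β) ⊗ₜ[k] (u α)) ⊗ₜ[k] (m (v α) (v β)))

def CYexp {k P : Type} [Field k] [AddCommGroup P] [Module k P]
    (br : P →ₗ[k] P →ₗ[k] P) {ι : Type} [Fintype ι] (u v : ι → P) :
    (P ⊗[k] P) ⊗[k] P :=
  ∑ α : ι, ∑ β : ι,
    (((br (u α) (u β)) ⊗ₜ[k] (v α)) ⊗ₜ[k] (v β)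
      + ((u α) ⊗ₜ[k] (u β)) ⊗ₜ[k] (br (v α) (v β))
      + ((u α) ⊗ₜ[k] (br (v α) (u β))) ⊗ₜ[k] (v β))

def sharp (k : Type) [Field k] {V : Type} [AddCommGroup V] [Module k V]
    (s : V ⊗[k] V) (ξ : V →ₗ[k] k) : V :=
  TensorProduct.lid k V (LinearMap.rTensor V ξ s)

abbrev PermB (k : Type) [Field k] : Type := ((ℤ × ℤ) × Fin 2) →₀ k

def bB (k : Type) [Field k] (i₁ i₂ : ℤ) (s : Fin 2) : PermB k :=
  Finsupp.single ((i₁, i₂), s) 1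



section TensorProduct

variable {R M N : Type*} [CommSemiring R] [AddCommMonoid M] [Module R M]
  [AddCommMonoid N] [Module R N] (m : M ⊗[R] N →ₗ[R] M ⊗[R] N →ₗ[R] M ⊗[R] N)

theorem LinearMap.comm_of_tmul
    (h : ∀ (a₁ a₂ : M) (b₁ b₂ : N), m (a₁ ⊗ₜ b₁) (a₂ ⊗ₜ b₂) = m (a₂ ⊗ₜ b₂) (a₁ ⊗ₜ b₁))
    (u v : M ⊗[R] N) : m u v = m v u := by
  have hflip : m.flip = m := by
    ext a₁ b₁ a₂ b₂
    exact h a₂ a₁ b₂ b₁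
  exact LinearMap.congr_fun₂ hflip v u

theorem LinearMap.assoc_of_tmul
    (h : ∀ (a₁ a₂ a₃ : M) (b₁ b₂ b₃ : N),
      m (m (a₁ ⊗ₜ b₁) (a₂ ⊗ₜ b₂)) (a₃ ⊗ₜ b₃) = m (a₁ ⊗ₜ b₁) (m (a₂ ⊗ₜ b₂) (a₃ ⊗ₜ b₃)))
    (u v w : M ⊗[R] N) : m (m u v) w = m u (m v w) := by
  have hcomp : m.compr₂ m = (LinearMap.llcomp R _ _ _).compl₁₂ m m := by
    ext a₁ b₁ a₂ b₂ a₃ b₃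
    exact h a₁ a₂ a₃ b₁ b₂ b₃
  exact LinearMap.congr_fun (LinearMap.congr_fun₂ hcomp u v) w

end TensorProduct

section ZinbielPerm

variable {k A B : Type} [Field k] [AddCommGroup A] [Module k A] [AddCommGroup B] [Module k B]
  {ast : A →ₗ[k] A →ₗ[k] A} {dia : B →ₗ[k] B →ₗ[k] B}

theorem IsZinbiel.left_comm (hast : IsZinbiel ast) (a₁ a₂ a₃ : A) :
    ast a₁ (ast a₂ a₃) = ast a₂ (ast a₁ a₃) := by
  rw [hast, hast, add_comm]

variable (ast dia) in
def nestedTmul (a₁ a₂ a₃ : A) (b₁ b₂ b₃ : B) : A ⊗[k] B :=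
  ast a₁ (ast a₂ a₃) ⊗ₜ dia (dia b₁ b₂) b₃

theorem nestedTmul_swap (hast : IsZinbiel ast) (hdia : IsPerm dia)
    (a₁ a₂ a₃ : A) (b₁ b₂ b₃ : B) :
    nestedTmul ast dia a₁ a₂ a₃ b₁ b₂ b₃ = nestedTmul ast dia a₂ a₁ a₃ b₂ b₁ b₃ := by
  rw [nestedTmul, nestedTmul, hast.left_comm, (hdia b₁ b₂ b₃).2]

theorem induced_mul_mul_tmul (hast : IsZinbiel ast) (hdia : IsPerm dia)
    {m : A ⊗[k] B →ₗ[k] A ⊗[k] B →ₗ[k] A ⊗[k] B}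
    (hm : ∀ (a₁ a₂ : A) (b₁ b₂ : B),
      m (a₁ ⊗ₜ b₁) (a₂ ⊗ₜ b₂) = ast a₁ a₂ ⊗ₜ dia b₁ b₂ + ast a₂ a₁ ⊗ₜ dia b₂ b₁)
    (a₁ a₂ a₃ : A) (b₁ b₂ b₃ : B) :
    m (m (a₁ ⊗ₜ b₁) (a₂ ⊗ₜ b₂)) (a₃ ⊗ₜ b₃)
      = nestedTmul ast dia a₁ a₂ a₃ b₁ b₂ b₃ + nestedTmul ast dia a₃ a₁ a₂ b₃ b₁ b₂
        + nestedTmul ast dia a₃ a₂ a₁ b₃ b₂ b₁ := by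
  rw [hm, map_add, LinearMap.add_apply, hm, hm, (hdia b₃ b₁ b₂).1, (hdia b₃ b₂ b₁).1,
    (hdia b₂ b₁ b₃).2]
  simp only [nestedTmul, hast a₁ a₂ a₃, add_tmul]
  abel

end ZinbielPerm

theorem statement0_general (k A B : Type) [Field k]
    [AddCommGroup A] [Module k A] [AddCommGroup B] [Module k B]
    (ast : A →ₗ[k] A →ₗ[k] A) (hast : IsZinbiel ast)
    (dia : B →ₗ[k] B →ₗ[k] B) (hdia : IsPerm dia)
    (m : A ⊗[k] B →ₗ[k] A ⊗[k] B →ₗ[k] A ⊗[k] B)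
    (hm : ∀ (a₁ a₂ : A) (b₁ b₂ : B),
      m (a₁ ⊗ₜ[k] b₁) (a₂ ⊗ₜ[k] b₂)
        = (ast a₁ a₂) ⊗ₜ[k] (dia b₁ b₂) + (ast a₂ a₁) ⊗ₜ[k] (dia b₂ b₁))
    :
    (∀ u v : A ⊗[k] B, m u v = m v u) ∧
    (∀ u v w : A ⊗[k] B, m (m u v) w = m u (m v w)) := by
  have hcomm : ∀ u v : A ⊗[k] B, m u v = m v u :=
    m.comm_of_tmul fun a₁ a₂ b₁ b₂ => by rw [hm, hm, add_comm]
  refine ⟨hcomm, m.assoc_of_tmul fun a₁ a₂ a₃ b₁ b₂ b₃ => ?_⟩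
  rw [hcomm (a₁ ⊗ₜ b₁) (m _ _), induced_mul_mul_tmul hast hdia hm,
    induced_mul_mul_tmul hast hdia hm, nestedTmul_swap hast hdia a₃ a₁,
    nestedTmul_swap hast hdia a₃ a₂]
  abel

theorem statement0 (k A B : Type) [Field k] [CharZero k]
    [AddCommGroup A] [Module k A] [AddCommGroup B] [Module k B]
    (ast : A →ₗ[k] A →ₗ[k] A) (hast : IsZinbiel ast)
    (dia : B →ₗ[k] B →ₗ[k] B) (hdia : IsPerm dia)
    (m : A ⊗[k] B →ₗ[k] A ⊗[k] B →ₗ[k] A ⊗[k] B)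
    (hm : ∀ (a₁ a₂ : A) (b₁ b₂ : B),
      m (a₁ ⊗ₜ[k] b₁) (a₂ ⊗ₜ[k] b₂)
        = (ast a₁ a₂) ⊗ₜ[k] (dia b₁ b₂) + (ast a₂ a₁) ⊗ₜ[k] (dia b₂ b₁))
    :
    (∀ u v : A ⊗[k] B, m u v = m v u) ∧
    (∀ u v w : A ⊗[k] B, m (m u v) w = m u (m v w)) :=
  statement0_general k A B ast hast dia hdia m hm
end
end

section
/- Let k be a field of characteristic zero, (A, ∗, ∘) a pre-Poisson algebra over k and (B, ⋄) a perm algebra over k. Then (A ⊗ B, ·, [−,−]), with the induced product · and the induced bracket [−,−], is a Poisson algebra. -/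
open TensorProduct

noncomputable section

/-!
In a perm algebra every product of three elements, bracketed either way and with its first two
factors in either order, equals `(x ⋄ y) ⋄ z` with `z` its last factor. Evaluated on pure tensors
`aᵢ ⊗ bᵢ`, each Poisson identity therefore collects into three terms `cᵢ ⊗ βᵢ`, where `βᵢ` is the
triple product of the `b`'s ending in `bᵢ`, and each coefficient `cᵢ` vanishes by one of the
Zinbiel, pre-Lie or compatibility identities of `A`. Both sides of every identity are additive in
each argument, so the pure tensors suffice.
-/

namespace TensorProduct

variable {R M N Q : Type*} [CommSemiring R] [AddCommMonoid M] [Module R M]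
  [AddCommMonoid N] [Module R N] [AddCommGroup Q]

theorem eq_zero_of_tmul {F : M ⊗[R] N → Q} (hadd : ∀ x y, F (x + y) = F x + F y)
    (htmul : ∀ a b, F (a ⊗ₜ b) = 0) (u : M ⊗[R] N) : F u = 0 := by
  induction u using TensorProduct.induction_on with
  | zero => simpa using hadd 0 0
  | tmul a b => exact htmul a b
  | add x y hx hy => rw [hadd, hx, hy, add_zero]

theorem eq_zero_of_tmul₂ {F : M ⊗[R] N → M ⊗[R] N → Q}
    (hadd₁ : ∀ x y v, F (x + y) v = F x v + F y v) (hadd₂ : ∀ u x y, F u (x + y) = F u x + F u y)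
    (htmul : ∀ a₁ b₁ a₂ b₂, F (a₁ ⊗ₜ b₁) (a₂ ⊗ₜ b₂) = 0) (u v : M ⊗[R] N) : F u v = 0 :=
  eq_zero_of_tmul (F := fun u ↦ F u v) (fun x y ↦ hadd₁ x y v)
    (fun a₁ b₁ ↦ eq_zero_of_tmul (hadd₂ _) (htmul a₁ b₁) v) u

theorem eq_zero_of_tmul₃ {F : M ⊗[R] N → M ⊗[R] N → M ⊗[R] N → Q}
    (hadd₁ : ∀ x y v w, F (x + y) v w = F x v w + F y v w)
    (hadd₂ : ∀ u x y w, F u (x + y) w = F u x w + F u y w)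
    (hadd₃ : ∀ u v x y, F u v (x + y) = F u v x + F u v y)
    (htmul : ∀ a₁ b₁ a₂ b₂ a₃ b₃, F (a₁ ⊗ₜ b₁) (a₂ ⊗ₜ b₂) (a₃ ⊗ₜ b₃) = 0)
    (u v w : M ⊗[R] N) : F u v w = 0 :=
  eq_zero_of_tmul₂ (F := fun u v ↦ F u v w) (fun x y v ↦ hadd₁ x y v w) (fun u x y ↦ hadd₂ u x y w)
    (fun a₁ b₁ a₂ b₂ ↦ eq_zero_of_tmul (hadd₃ _ _) (htmul a₁ b₁ a₂ b₂) w) u v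

end TensorProduct

namespace IsPerm

variable {k B : Type} [Field k] [AddCommGroup B] [Module k B] {dia : B →ₗ[k] B →ₗ[k] B}

theorem dia_assoc (h : IsPerm dia) (x y z : B) : dia x (dia y z) = dia (dia x y) z :=
  (h x y z).1

theorem dia_dia_comm (h : IsPerm dia) (x y z : B) : dia (dia x y) z = dia (dia y x) z :=
  (h x y z).2

end IsPerm

section InducedPoisson

variable {k A B : Type} [Field k] [AddCommGroup A] [Module k A] [AddCommGroup B] [Module k B]
  {ast circ : A →ₗ[k] A →ₗ[k] A} {dia : B →ₗ[k] B →ₗ[k] B}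
  {m br : A ⊗[k] B →ₗ[k] A ⊗[k] B →ₗ[k] A ⊗[k] B}

variable (ast circ dia m br) in
def IsInducedProduct : Prop :=
  ∀ (a₁ a₂ : A) (b₁ b₂ : B),
    m (a₁ ⊗ₜ[k] b₁) (a₂ ⊗ₜ[k] b₂) = (ast a₁ a₂) ⊗ₜ[k] (dia b₁ b₂) + (ast a₂ a₁) ⊗ₜ[k] (dia b₂ b₁)

variable (ast circ dia m br) in
def IsInducedBracket : Prop :=
  ∀ (a₁ a₂ : A) (b₁ b₂ : B),
    br (a₁ ⊗ₜ[k] b₁) (a₂ ⊗ₜ[k] b₂)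
      = (circ a₁ a₂) ⊗ₜ[k] (dia b₁ b₂) - (circ a₂ a₁) ⊗ₜ[k] (dia b₂ b₁)

theorem IsInducedProduct.comm (hm : IsInducedProduct ast dia m) (u v : A ⊗[k] B) :
    m u v = m v u := by
  refine sub_eq_zero.1 (TensorProduct.eq_zero_of_tmul₂ (F := fun u v ↦ m u v - m v u) ?_ ?_
    (fun a₁ b₁ a₂ b₂ ↦ ?_) u v)
  iterate 2 · intros; simp only [map_add, LinearMap.add_apply]; abel
  rw [hm, hm, add_comm, sub_self]

theorem IsInducedProduct.assoc (hm : IsInducedProduct ast dia m) (hZ : IsZinbiel ast)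
    (hdia : IsPerm dia) (u v w : A ⊗[k] B) : m (m u v) w = m u (m v w) := by
  refine sub_eq_zero.1 (TensorProduct.eq_zero_of_tmul₃
    (F := fun u v w ↦ m (m u v) w - m u (m v w)) ?_ ?_ ?_ (fun a₁ b₁ a₂ b₂ a₃ b₃ ↦ ?_) u v w)
  iterate 3 · intros; simp only [map_add, LinearMap.add_apply]; abel
  simp only [hm _, map_add, LinearMap.add_apply, hdia.dia_assoc, hdia.dia_dia_comm b₂ b₁,
    hdia.dia_dia_comm b₃ b₁, hdia.dia_dia_comm b₃ b₂]
  linear_combination (norm := skip)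
    congrArg (· ⊗ₜ[k] dia (dia b₁ b₃) b₂) (hZ a₃ a₁ a₂)
    + congrArg (· ⊗ₜ[k] dia (dia b₂ b₃) b₁) (hZ a₃ a₂ a₁)
    - congrArg (· ⊗ₜ[k] dia (dia b₁ b₂) b₃) (hZ a₁ a₂ a₃)
    - congrArg (· ⊗ₜ[k] dia (dia b₁ b₃) b₂) (hZ a₁ a₃ a₂)
  simp only [add_tmul]
  abel

theorem IsInducedBracket.antisymm (hbr : IsInducedBracket circ dia br) (u v : A ⊗[k] B) :
    br u v = - br v u := by
  refine eq_neg_iff_add_eq_zero.2 (TensorProduct.eq_zero_of_tmul₂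
    (F := fun u v ↦ br u v + br v u) ?_ ?_ (fun a₁ b₁ a₂ b₂ ↦ ?_) u v)
  iterate 2 · intros; simp only [map_add, LinearMap.add_apply]; abel
  rw [hbr, hbr, sub_add_sub_cancel, sub_self]

theorem IsInducedBracket.jacobi (hbr : IsInducedBracket circ dia br) (hPL : IsPreLie circ)
    (hdia : IsPerm dia) (u v w : A ⊗[k] B) :
    br (br u v) w + br (br v w) u + br (br w u) v = 0 := by
  refine TensorProduct.eq_zero_of_tmul₃
    (F := fun u v w ↦ br (br u v) w + br (br v w) u + br (br w u) v) ?_ ?_ ?_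
    (fun a₁ b₁ a₂ b₂ a₃ b₃ ↦ ?_) u v w
  iterate 3 · intros; simp only [map_add, LinearMap.add_apply]; abel
  simp only [hbr _, map_sub, LinearMap.sub_apply, hdia.dia_assoc, hdia.dia_dia_comm b₂ b₁,
    hdia.dia_dia_comm b₃ b₁, hdia.dia_dia_comm b₃ b₂]
  linear_combination (norm := skip)
    congrArg (· ⊗ₜ[k] dia (dia b₁ b₂) b₃) (hPL a₁ a₂ a₃)
    + congrArg (· ⊗ₜ[k] dia (dia b₂ b₃) b₁) (hPL a₂ a₃ a₁)
    + congrArg (· ⊗ₜ[k] dia (dia b₁ b₃) b₂) (hPL a₃ a₁ a₂)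
  simp only [sub_tmul]
  abel

theorem IsInducedBracket.leibniz (hbr : IsInducedBracket circ dia br)
    (hm : IsInducedProduct ast dia m) (hA : IsPrePoisson ast circ) (hdia : IsPerm dia)
    (u v w : A ⊗[k] B) : br u (m v w) = m (br u v) w + m v (br u w) := by
  obtain ⟨-, -, hL₁, hL₂⟩ := hA
  refine sub_eq_zero.1 (TensorProduct.eq_zero_of_tmul₃
    (F := fun u v w ↦ br u (m v w) - (m (br u v) w + m v (br u w))) ?_ ?_ ?_
    (fun a₁ b₁ a₂ b₂ a₃ b₃ ↦ ?_) u v w)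
  iterate 3 · intros; simp only [map_add, LinearMap.add_apply]; abel
  simp only [hm _, hbr _, map_add, map_sub, LinearMap.sub_apply, hdia.dia_assoc,
    hdia.dia_dia_comm b₂ b₁, hdia.dia_dia_comm b₃ b₁, hdia.dia_dia_comm b₃ b₂]
  linear_combination (norm := skip)
    - congrArg (· ⊗ₜ[k] dia (dia b₁ b₂) b₃) (hL₁ a₁ a₂ a₃)
    - congrArg (· ⊗ₜ[k] dia (dia b₁ b₃) b₂) (hL₁ a₁ a₃ a₂)
    - congrArg (· ⊗ₜ[k] dia (dia b₂ b₃) b₁) (hL₂ a₂ a₃ a₁)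
  simp only [add_tmul, sub_tmul, map_add, map_sub, LinearMap.add_apply, LinearMap.sub_apply]
  abel

end InducedPoisson

theorem statement1_general (k A B : Type) [Field k]
    [AddCommGroup A] [Module k A] [AddCommGroup B] [Module k B]
    (ast circ : A →ₗ[k] A →ₗ[k] A) (hA : IsPrePoisson ast circ)
    (dia : B →ₗ[k] B →ₗ[k] B) (hdia : IsPerm dia)
    (m : A ⊗[k] B →ₗ[k] A ⊗[k] B →ₗ[k] A ⊗[k] B)
    (hm : ∀ (a₁ a₂ : A) (b₁ b₂ : B),
      m (a₁ ⊗ₜ[k] b₁) (a₂ ⊗ₜ[k] b₂)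
        = (ast a₁ a₂) ⊗ₜ[k] (dia b₁ b₂) + (ast a₂ a₁) ⊗ₜ[k] (dia b₂ b₁))
    (br : A ⊗[k] B →ₗ[k] A ⊗[k] B →ₗ[k] A ⊗[k] B)
    (hbr : ∀ (a₁ a₂ : A) (b₁ b₂ : B),
      br (a₁ ⊗ₜ[k] b₁) (a₂ ⊗ₜ[k] b₂)
        = (circ a₁ a₂) ⊗ₜ[k] (dia b₁ b₂) - (circ a₂ a₁) ⊗ₜ[k] (dia b₂ b₁))
    :
    IsPoisson m br :=
  ⟨IsInducedProduct.comm hm, IsInducedProduct.assoc hm hA.1 hdia, IsInducedBracket.antisymm hbr,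
    IsInducedBracket.jacobi hbr hA.2.1 hdia, IsInducedBracket.leibniz hbr hm hA hdia⟩

theorem statement1 (k A B : Type) [Field k] [CharZero k]
    [AddCommGroup A] [Module k A] [AddCommGroup B] [Module k B]
    (ast circ : A →ₗ[k] A →ₗ[k] A) (hA : IsPrePoisson ast circ)
    (dia : B →ₗ[k] B →ₗ[k] B) (hdia : IsPerm dia)
    (m : A ⊗[k] B →ₗ[k] A ⊗[k] B →ₗ[k] A ⊗[k] B)
    (hm : ∀ (a₁ a₂ : A) (b₁ b₂ : B),
      m (a₁ ⊗ₜ[k] b₁) (a₂ ⊗ₜ[k] b₂)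
        = (ast a₁ a₂) ⊗ₜ[k] (dia b₁ b₂) + (ast a₂ a₁) ⊗ₜ[k] (dia b₂ b₁))
    (br : A ⊗[k] B →ₗ[k] A ⊗[k] B →ₗ[k] A ⊗[k] B)
    (hbr : ∀ (a₁ a₂ : A) (b₁ b₂ : B),
      br (a₁ ⊗ₜ[k] b₁) (a₂ ⊗ₜ[k] b₂)
        = (circ a₁ a₂) ⊗ₜ[k] (dia b₁ b₂) - (circ a₂ a₁) ⊗ₜ[k] (dia b₂ b₁))
    :
    IsPoisson m br :=
  statement1_general k A B ast circ hA dia hdia m hm br hbr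
end
end

section
/- Let k be a field of characteristic zero, (A, ϑ) a Zinbiel coalgebra and (B, ν) a perm coalgebra over k. Define Δ : A ⊗ B → (A ⊗ B) ⊗ (A ⊗ B) by Δ(a ⊗ b) = (id ⊗ id + τ)(ϑ(a) • ν(b)). Then (A ⊗ B, Δ) is a cocommutative coassociative coalgebra, i.e. τΔ = Δ and (Δ ⊗ id)Δ = (id ⊗ Δ)Δ. -/
open TensorProduct

noncomputable section

/-!
Write `Δ = (id + τ) ∘ (ϑ • ν)`; cocommutativity is then `τ² = id`. For coassociativity, the
interchange map `intch3 : A⊗³ ⊗ B⊗³ → (A ⊗ B)⊗³` intertwines the diagonal action of `S₃` on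
its source with its action on `(A ⊗ B)⊗³`, so both `(Δ ⊗ id) Δ (a ⊗ b)` and `(id ⊗ Δ) Δ (a ⊗ b)` expand into
sums of terms `intch3 (πX ⊗ π'Y)` with `X = (ϑ ⊗ id) ϑ a`, `Y = (ν ⊗ id) ν b` and `π, π' ∈ S₃`.
The Zinbiel identity turns `(id ⊗ ϑ) ϑ a` into `X + (12)X`, the perm identities give
`(id ⊗ ν) ν b = Y = (12)Y`, and the two sums then agree term by term.
-/

section Permutations
variable (k : Type) [Field k] (M : Type) [AddCommGroup M] [Module k M]

def swap12 : (M ⊗[k] M) ⊗[k] M →ₗ[k] (M ⊗[k] M) ⊗[k] M :=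
  TensorProduct.map (tau k M) (idm k M)

def swap23 : (M ⊗[k] M) ⊗[k] M →ₗ[k] (M ⊗[k] M) ⊗[k] M :=
  (TensorProduct.rightComm k M M M).toLinearMap

def rotate : (M ⊗[k] M) ⊗[k] M →ₗ[k] (M ⊗[k] M) ⊗[k] M :=
  (TensorProduct.comm k M (M ⊗[k] M)).toLinearMap ∘ₗ
    (TensorProduct.assoc k M M M).toLinearMap

variable {k M}

@[simp] lemma tau_tau (Φ : M ⊗[k] M) : tau k M (tau k M Φ) = Φ :=
  TensorProduct.comm_comm k M M Φ

lemma rotate_unassoc (W : M ⊗[k] (M ⊗[k] M)) :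
    rotate k M (unassoc k M W) = TensorProduct.comm k M (M ⊗[k] M) W := by
  simp [rotate, unassoc]

lemma rotate_rotate (W : (M ⊗[k] M) ⊗[k] M) :
    rotate k M (rotate k M W) = unassoc k M (TensorProduct.comm k (M ⊗[k] M) M W) := by
  have h : rotate k M ∘ₗ rotate k M
      = unassoc k M ∘ₗ (TensorProduct.comm k (M ⊗[k] M) M).toLinearMap := by
    ext x y z; rfl
  exact LinearMap.congr_fun h W

lemma rotate_swap12 (W : (M ⊗[k] M) ⊗[k] M) : rotate k M (swap12 k M W) = swap23 k M W := by
  have h : rotate k M ∘ₗ swap12 k M = swap23 k M := by ext x y z; rfl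
  exact LinearMap.congr_fun h W

lemma swap12_rotate_swap12 (W : (M ⊗[k] M) ⊗[k] M) :
    swap12 k M (rotate k M (swap12 k M W)) = rotate k M (rotate k M W) := by
  have h : swap12 k M ∘ₗ rotate k M ∘ₗ swap12 k M = rotate k M ∘ₗ rotate k M := by
    ext x y z; rfl
  exact LinearMap.congr_fun h W

lemma swap23_swap12 (W : (M ⊗[k] M) ⊗[k] M) : swap23 k M (swap12 k M W) = rotate k M W := by
  have h : swap23 k M ∘ₗ swap12 k M = rotate k M := by ext x y z; rfl
  exact LinearMap.congr_fun h W

lemma swap23_rotate_rotate (W : (M ⊗[k] M) ⊗[k] M) :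
    swap23 k M (rotate k M (rotate k M W)) = swap12 k M (rotate k M W) := by
  have h : swap23 k M ∘ₗ rotate k M ∘ₗ rotate k M = swap12 k M ∘ₗ rotate k M := by
    ext x y z; rfl
  exact LinearMap.congr_fun h W

lemma unassoc_tmul_tau (w : M) (Φ : M ⊗[k] M) :
    unassoc k M (w ⊗ₜ tau k M Φ) = swap23 k M (unassoc k M (w ⊗ₜ Φ)) := by
  have h : unassoc k M ∘ₗ TensorProduct.mk k M _ w ∘ₗ tau k M
      = swap23 k M ∘ₗ unassoc k M ∘ₗ TensorProduct.mk k M _ w := by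
    ext y z; rfl
  exact LinearMap.congr_fun h Φ

lemma map_idm_tau (δ : M →ₗ[k] M ⊗[k] M) (Φ : M ⊗[k] M) :
    TensorProduct.map δ (idm k M) (tau k M Φ)
      = rotate k M (unassoc k M (TensorProduct.map (idm k M) δ Φ)) := by
  rw [rotate_unassoc, tau, LinearEquiv.coe_coe, TensorProduct.map_comm]

lemma unassoc_map_idm_tau (δ : M →ₗ[k] M ⊗[k] M) (Φ : M ⊗[k] M) :
    unassoc k M (TensorProduct.map (idm k M) δ (tau k M Φ))
      = rotate k M (rotate k M (TensorProduct.map δ (idm k M) Φ)) := by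
  rw [rotate_rotate, tau, LinearEquiv.coe_coe, TensorProduct.map_comm]

end Permutations

section Interchange
variable (k : Type) [Field k] (A B : Type) [AddCommGroup A] [Module k A]
  [AddCommGroup B] [Module k B]

def intch3 : ((A ⊗[k] A) ⊗[k] A) ⊗[k] ((B ⊗[k] B) ⊗[k] B) →ₗ[k]
    ((A ⊗[k] B) ⊗[k] (A ⊗[k] B)) ⊗[k] (A ⊗[k] B) :=
  TensorProduct.map (intch k A B) LinearMap.id ∘ₗ
    (TensorProduct.tensorTensorTensorComm k (A ⊗[k] A) A (B ⊗[k] B) B).toLinearMap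

def tensorComul (ϑ : A →ₗ[k] A ⊗[k] A) (ν : B →ₗ[k] B ⊗[k] B) :
    A ⊗[k] B →ₗ[k] (A ⊗[k] B) ⊗[k] (A ⊗[k] B) :=
  (idm k _ + tau k _) ∘ₗ intch k A B ∘ₗ TensorProduct.map ϑ ν

variable {k A B}

@[simp] lemma intch_tmul (x y : A) (u v : B) :
    intch k A B ((x ⊗ₜ y) ⊗ₜ (u ⊗ₜ v)) = (x ⊗ₜ u) ⊗ₜ (y ⊗ₜ v) := rfl

@[simp] lemma intch3_tmul_tmul (Φ : A ⊗[k] A) (x : A) (Ψ : B ⊗[k] B) (u : B) :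
    intch3 k A B ((Φ ⊗ₜ x) ⊗ₜ (Ψ ⊗ₜ u)) = intch k A B (Φ ⊗ₜ Ψ) ⊗ₜ (x ⊗ₜ u) := rfl

lemma tau_intch (Φ : A ⊗[k] A) (Ψ : B ⊗[k] B) :
    tau k (A ⊗[k] B) (intch k A B (Φ ⊗ₜ Ψ)) = intch k A B (tau k A Φ ⊗ₜ tau k B Ψ) := by
  have h : tau k (A ⊗[k] B) ∘ₗ intch k A B
      = intch k A B ∘ₗ TensorProduct.map (tau k A) (tau k B) := by
    ext; rfl
  exact LinearMap.congr_fun h (Φ ⊗ₜ Ψ)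

lemma swap12_intch3 (U : (A ⊗[k] A) ⊗[k] A) (V : (B ⊗[k] B) ⊗[k] B) :
    swap12 k (A ⊗[k] B) (intch3 k A B (U ⊗ₜ V))
      = intch3 k A B (swap12 k A U ⊗ₜ swap12 k B V) := by
  have h : swap12 k (A ⊗[k] B) ∘ₗ intch3 k A B
      = intch3 k A B ∘ₗ TensorProduct.map (swap12 k A) (swap12 k B) := by
    ext; rfl
  exact LinearMap.congr_fun h (U ⊗ₜ V)

lemma swap23_intch3 (U : (A ⊗[k] A) ⊗[k] A) (V : (B ⊗[k] B) ⊗[k] B) :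
    swap23 k (A ⊗[k] B) (intch3 k A B (U ⊗ₜ V))
      = intch3 k A B (swap23 k A U ⊗ₜ swap23 k B V) := by
  have h : swap23 k (A ⊗[k] B) ∘ₗ intch3 k A B
      = intch3 k A B ∘ₗ TensorProduct.map (swap23 k A) (swap23 k B) := by
    ext; rfl
  exact LinearMap.congr_fun h (U ⊗ₜ V)

lemma unassoc_tmul_intch (x : A) (u : B) (Φ : A ⊗[k] A) (Ψ : B ⊗[k] B) :
    unassoc k (A ⊗[k] B) ((x ⊗ₜ u) ⊗ₜ intch k A B (Φ ⊗ₜ Ψ))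
      = intch3 k A B (unassoc k A (x ⊗ₜ Φ) ⊗ₜ unassoc k B (u ⊗ₜ Ψ)) := by
  have h : unassoc k (A ⊗[k] B) ∘ₗ TensorProduct.mk k _ _ (x ⊗ₜ u) ∘ₗ intch k A B
      = intch3 k A B ∘ₗ TensorProduct.map (unassoc k A ∘ₗ TensorProduct.mk k _ _ x)
          (unassoc k B ∘ₗ TensorProduct.mk k _ _ u) := by
    ext; rfl
  exact LinearMap.congr_fun h (Φ ⊗ₜ Ψ)

lemma intch3_sum_eq_of_swap12_eq (X : (A ⊗[k] A) ⊗[k] A) (Y : (B ⊗[k] B) ⊗[k] B)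
    (hY : swap12 k B Y = Y) :
    intch3 k A B (X ⊗ₜ Y) + swap12 k _ (intch3 k A B (X ⊗ₜ Y))
      + (intch3 k A B (rotate k A (X + swap12 k A X) ⊗ₜ rotate k B Y)
        + swap12 k _ (intch3 k A B (rotate k A (X + swap12 k A X) ⊗ₜ rotate k B Y)))
    = intch3 k A B ((X + swap12 k A X) ⊗ₜ Y)
      + swap23 k _ (intch3 k A B ((X + swap12 k A X) ⊗ₜ Y))
      + (intch3 k A B (rotate k A (rotate k A X) ⊗ₜ rotate k B (rotate k B Y))
        + swap23 k _
            (intch3 k A B (rotate k A (rotate k A X) ⊗ₜ rotate k B (rotate k B Y)))) := by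
  have hY₁ : rotate k B Y = swap23 k B Y := by rw [← rotate_swap12, hY]
  have hY₂ : swap12 k B (rotate k B Y) = rotate k B (rotate k B Y) := by
    simpa only [hY] using swap12_rotate_swap12 Y
  have hY₃ : swap23 k B (rotate k B (rotate k B Y)) = rotate k B (rotate k B Y) := by
    rw [swap23_rotate_rotate, hY₂]
  simp only [map_add, add_tmul, swap12_intch3, swap23_intch3]
  rw [hY, hY₂, hY₃, swap12_rotate_swap12, rotate_swap12, swap23_swap12,
    swap23_rotate_rotate X, hY₁]
  abel

end Interchange

section TensorComul
variable {k A B : Type} [Field k] [AddCommGroup A] [Module k A]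
  [AddCommGroup B] [Module k B] (ϑ : A →ₗ[k] A ⊗[k] A) (ν : B →ₗ[k] B ⊗[k] B)

lemma tensorComul_tmul (a : A) (b : B) :
    tensorComul k A B ϑ ν (a ⊗ₜ b)
      = intch k A B (ϑ a ⊗ₜ ν b) + tau k (A ⊗[k] B) (intch k A B (ϑ a ⊗ₜ ν b)) := rfl

lemma tau_tensorComul (q : A ⊗[k] B) :
    tau k (A ⊗[k] B) (tensorComul k A B ϑ ν q) = tensorComul k A B ϑ ν q := by
  simp [tensorComul, idm, add_comm]

lemma map_tensorComul_idm_intch (Φ : A ⊗[k] A) (Ψ : B ⊗[k] B) :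
    TensorProduct.map (tensorComul k A B ϑ ν) (idm k _) (intch k A B (Φ ⊗ₜ Ψ))
      = intch3 k A B (TensorProduct.map ϑ (idm k A) Φ ⊗ₜ TensorProduct.map ν (idm k B) Ψ)
        + swap12 k _ (intch3 k A B
            (TensorProduct.map ϑ (idm k A) Φ ⊗ₜ TensorProduct.map ν (idm k B) Ψ)) := by
  have h : TensorProduct.map (tensorComul k A B ϑ ν) (idm k _) ∘ₗ intch k A B
      = (idm k _ + swap12 k _) ∘ₗ intch3 k A B
          ∘ₗ TensorProduct.map (TensorProduct.map ϑ (idm k A))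
            (TensorProduct.map ν (idm k B)) := by
    ext x y u v
    simp [tensorComul_tmul, add_tmul, swap12, idm]
  exact LinearMap.congr_fun h (Φ ⊗ₜ Ψ)

lemma unassoc_map_idm_tensorComul_intch (Φ : A ⊗[k] A) (Ψ : B ⊗[k] B) :
    unassoc k _ (TensorProduct.map (idm k _) (tensorComul k A B ϑ ν) (intch k A B (Φ ⊗ₜ Ψ)))
      = intch3 k A B (unassoc k A (TensorProduct.map (idm k A) ϑ Φ)
            ⊗ₜ unassoc k B (TensorProduct.map (idm k B) ν Ψ))
        + swap23 k _ (intch3 k A B (unassoc k A (TensorProduct.map (idm k A) ϑ Φ)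
            ⊗ₜ unassoc k B (TensorProduct.map (idm k B) ν Ψ))) := by
  have h : unassoc k _ ∘ₗ TensorProduct.map (idm k _) (tensorComul k A B ϑ ν) ∘ₗ intch k A B
      = (idm k _ + swap23 k _) ∘ₗ intch3 k A B
          ∘ₗ TensorProduct.map (unassoc k A ∘ₗ TensorProduct.map (idm k A) ϑ)
            (unassoc k B ∘ₗ TensorProduct.map (idm k B) ν) := by
    ext x y u v
    simp [tensorComul_tmul, tmul_add, unassoc_tmul_tau, unassoc_tmul_intch, idm]
  exact LinearMap.congr_fun h (Φ ⊗ₜ Ψ)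

variable {ϑ ν}

lemma tensorComul_coassoc (hϑ : IsZinbielCo ϑ) (hν : IsPermCo ν) (q : A ⊗[k] B) :
    TensorProduct.map (tensorComul k A B ϑ ν) (idm k _) (tensorComul k A B ϑ ν q)
      = unassoc k _
          (TensorProduct.map (idm k _) (tensorComul k A B ϑ ν) (tensorComul k A B ϑ ν q)) := by
  induction q using TensorProduct.induction_on with
  | zero => simp
  | add q q' hq hq' => simp only [map_add, hq, hq']
  | tmul a b =>
    obtain ⟨hν_assoc, hν_swap⟩ := hν b
    rw [tensorComul_tmul, map_add, map_add, map_add, tau_intch, map_tensorComul_idm_intch,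
      map_tensorComul_idm_intch, unassoc_map_idm_tensorComul_intch,
      unassoc_map_idm_tensorComul_intch, map_idm_tau, map_idm_tau, unassoc_map_idm_tau,
      unassoc_map_idm_tau, ← hϑ a, ← hν_assoc]
    exact intch3_sum_eq_of_swap12_eq _ _ hν_swap.symm

end TensorComul

theorem statement4_general (k A B : Type) [Field k]
    [AddCommGroup A] [Module k A] [AddCommGroup B] [Module k B]
    (ϑ : A →ₗ[k] A ⊗[k] A) (hϑ : IsZinbielCo ϑ)
    (ν : B →ₗ[k] B ⊗[k] B) (hνp : IsPermCo ν)
    (Δ : A ⊗[k] B →ₗ[k] (A ⊗[k] B) ⊗[k] (A ⊗[k] B))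
    (hΔ : ∀ (a : A) (b : B),
      Δ (a ⊗ₜ[k] b)
        = intch k A (B) ((ϑ a) ⊗ₜ[k] (ν b))
          + tau k (A ⊗[k] B) (intch k A (B) ((ϑ a) ⊗ₜ[k] (ν b))))
    :
    (∀ q : A ⊗[k] B, tau k (A ⊗[k] B) (Δ q) = Δ q) ∧
    (∀ q : A ⊗[k] B,
      TensorProduct.map Δ (idm k (A ⊗[k] B)) (Δ q)
        = unassoc k (A ⊗[k] B) (TensorProduct.map (idm k (A ⊗[k] B)) Δ (Δ q))) := by
  obtain rfl : Δ = tensorComul k A B ϑ ν := TensorProduct.ext' hΔ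
  exact ⟨tau_tensorComul ϑ ν, tensorComul_coassoc hϑ hνp⟩

theorem statement4 (k A B : Type) [Field k] [CharZero k]
    [AddCommGroup A] [Module k A] [AddCommGroup B] [Module k B]
    (ϑ : A →ₗ[k] A ⊗[k] A) (hϑ : IsZinbielCo ϑ)
    (ν : B →ₗ[k] B ⊗[k] B) (hνp : IsPermCo ν)
    (Δ : A ⊗[k] B →ₗ[k] (A ⊗[k] B) ⊗[k] (A ⊗[k] B))
    (hΔ : ∀ (a : A) (b : B),
      Δ (a ⊗ₜ[k] b)
        = intch k A (B) ((ϑ a) ⊗ₜ[k] (ν b))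
          + tau k (A ⊗[k] B) (intch k A (B) ((ϑ a) ⊗ₜ[k] (ν b))))
    :
    (∀ q : A ⊗[k] B, tau k (A ⊗[k] B) (Δ q) = Δ q) ∧
    (∀ q : A ⊗[k] B,
      TensorProduct.map Δ (idm k (A ⊗[k] B)) (Δ q)
        = unassoc k (A ⊗[k] B) (TensorProduct.map (idm k (A ⊗[k] B)) Δ (Δ q))) :=
  statement4_general k A B ϑ hϑ ν hνp Δ hΔ
end
end

section
/- Let k be a field of characteristic zero, (A, ∗, ∘) a finite-dimensional pre-Poisson algebra and r ∈ A ⊗ A a symmetric solution of the pre-Poisson Yang–Baxter equation, so that ϑ_r(a) = (id ⊗ (L+R)(a) − L(a) ⊗ id)(r) and θ_r(a) = (L̂(a) ⊗ id + id ⊗ (L̂−R̂)(a))(r) make (A, ∗, ∘, ϑ_r, θ_r) a triangular pre-Poisson bialgebra. Let (B, ⋄, ω) be a quadratic perm algebra with basis {eⱼ} and dual basis {fⱼ}, write r̂ = Σᵢ Σⱼ (xᵢ ⊗ eⱼ) ⊗ (yᵢ ⊗ fⱼ), and let Δ(a ⊗ b) = (id ⊗ id + τ)(ϑ_r(a) •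 ν_ω(b)) and δ(a ⊗ b) = (id ⊗ id − τ)(θ_r(a) • ν_ω(b)) be the coproducts of the induced Poisson bialgebra on (A ⊗ B, ·, [−,−]). Then for all a ∈ A, b ∈ B: Δ(a ⊗ b) = (id ⊗ L(a⊗b) − L(a⊗b) ⊗ id)(r̂) and δ(a ⊗ b) = (id ⊗ ad(a⊗b) + ad(a⊗b) ⊗ id)(r̂), where L(u)v = u·v and ad(u)v = [u,v] in A ⊗ B; hence the induced Poisson bialgebra is the triangular Poisson bialgebra associated with the skew-symmetric PYBE solution r̂. -/
open TensorProduct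

noncomputable section

/-! Put `c = ∑ⱼ eⱼ ⊗ fⱼ`, so that `r̂` is the interchange of `r ⊗ c`. Invariance of `ω` says that
`L(b)` is `ω`-self-adjoint and that `(L − R)(b)` is adjoint to `R(b)`; since `c` is the canonical
tensor of the pairing, this moves operators across it: `(L(b) ⊗ id) c = (id ⊗ L(b)) c` and
`((L − R)(b) ⊗ id) c = (id ⊗ R(b)) c`, while antisymmetry gives `τ c = −c` and the definition of
`ν_ω` gives `ν_ω(b) = ((L − R)(b) ⊗ id) c`. Then both sides of each identity are interchanges of
elements of `(A ⊗ A) ⊗ (B ⊗ B)` built from `r` and `c`, and the symmetry of `r` makes them agree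
term by term. -/

section MapSub

variable {R M N P : Type*} [CommRing R] [AddCommGroup M] [Module R M] [AddCommGroup N]
  [Module R N] [AddCommGroup P] [Module R P]

theorem map_sub_id (f g : M →ₗ[R] N) :
    map (f - g) (LinearMap.id : P →ₗ[R] P) = map f LinearMap.id - map g LinearMap.id :=
  LinearMap.rTensor_sub f g

theorem map_id_sub (f g : M →ₗ[R] N) :
    map (LinearMap.id : P →ₗ[R] P) (f - g) = map LinearMap.id f - map LinearMap.id g :=
  LinearMap.lTensor_sub f g

end MapSub

section CanonicalTensor

def canonicalTensor (R : Type*) {B ι : Type*} [CommRing R] [AddCommGroup B] [Module R B]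
    [Fintype ι] (e f : ι → B) : B ⊗[R] B :=
  ∑ i, e i ⊗ₜ[R] f i

variable {R B ι : Type*} [CommRing R] [AddCommGroup B] [Module R B] [DecidableEq ι]
  {ω : B →ₗ[R] B →ₗ[R] R} (e : Module.Basis ι R B) {f : ι → B}

theorem Module.Basis.coord_eq_of_pairing
    (hdual : ∀ i j, ω (f i) (e j) = if i = j then 1 else 0) (i : ι) :
    e.coord i = ω (f i) :=
  e.ext fun j => by simp [hdual, Finsupp.single_apply, eq_comm]

variable [Fintype ι]

theorem Module.Basis.sum_pairing_smul
    (hdual : ∀ i j, ω (f i) (e j) = if i = j then 1 else 0) (u : B) :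
    ∑ i, ω (f i) u • e i = u := by
  conv_rhs => rw [← e.sum_repr u]
  simp [← e.coord_eq_of_pairing hdual]

theorem Module.Basis.sum_pairing_smul_dual
    (hdual : ∀ i j, ω (f i) (e j) = if i = j then 1 else 0)
    (hnd : ∀ u, (∀ v, ω u v = 0) → u = 0) (u : B) :
    ∑ i, ω u (e i) • f i = u := by
  refine sub_eq_zero.1 (hnd _ fun v => ?_)
  conv_rhs => rw [← sub_self (ω u v)]
  nth_rewrite 2 [← e.sum_pairing_smul hdual v]
  simp [map_sum, mul_comm]

theorem Module.Basis.map_canonicalTensor_eq_of_adjoint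
    (hdual : ∀ i j, ω (f i) (e j) = if i = j then 1 else 0)
    (hnd : ∀ u, (∀ v, ω u v = 0) → u = 0) {φ ψ : B →ₗ[R] B}
    (hadj : ∀ u v, ω u (φ v) = ω (ψ u) v) :
    map φ LinearMap.id (canonicalTensor R e f) = map LinearMap.id ψ (canonicalTensor R e f) := by
  calc map φ LinearMap.id (canonicalTensor R e f)
      = ∑ j, ∑ i, ω (ψ (f i)) (e j) • (e i ⊗ₜ[R] f j) := by
        simp only [canonicalTensor, map_sum, map_tmul, LinearMap.id_apply, ← hadj]
        refine Finset.sum_congr rfl fun j _ => ?_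
        conv_lhs => rw [← e.sum_pairing_smul hdual (φ (e j))]
        simp only [sum_tmul, smul_tmul']
    _ = map LinearMap.id ψ (canonicalTensor R e f) := by
        rw [Finset.sum_comm]
        simp only [canonicalTensor, map_sum, map_tmul, LinearMap.id_apply]
        refine Finset.sum_congr rfl fun i _ => ?_
        conv_rhs => rw [← e.sum_pairing_smul_dual hdual hnd (ψ (f i))]
        simp only [tmul_sum, tmul_smul, smul_tmul']

theorem Module.Basis.comm_canonicalTensor
    (hdual : ∀ i j, ω (f i) (e j) = if i = j then 1 else 0)
    (hanti : ∀ u v, ω u v = - ω v u) :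
    TensorProduct.comm R B B (canonicalTensor R e f) = - canonicalTensor R e f := by
  calc TensorProduct.comm R B B (canonicalTensor R e f)
      = ∑ i, ∑ j, ω (f j) (f i) • (e j ⊗ₜ[R] e i) := by
        simp only [canonicalTensor, map_sum, comm_tmul]
        refine Finset.sum_congr rfl fun i _ => ?_
        conv_lhs => rw [← e.sum_pairing_smul hdual (f i)]
        simp only [sum_tmul, smul_tmul']
    _ = ∑ j, e j ⊗ₜ[R] ∑ i, -(ω (f i) (f j) • e i) := by
        rw [Finset.sum_comm]
        refine Finset.sum_congr rfl fun j _ => ?_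
        simp only [tmul_sum, ← tmul_smul, ← neg_smul, ← hanti]
    _ = - canonicalTensor R e f := by
        simp only [Finset.sum_neg_distrib, e.sum_pairing_smul hdual, tmul_neg, canonicalTensor]

variable {ωh : B ⊗[R] B →ₗ[R] B ⊗[R] B →ₗ[R] R}

theorem Module.Basis.eq_sum_pairing_smul_tmul
    (hdual : ∀ i j, ω (f i) (e j) = if i = j then 1 else 0)
    (hnd : ∀ u, (∀ v, ω u v = 0) → u = 0)
    (hωh : ∀ u₁ u₂ v₁ v₂, ωh (u₁ ⊗ₜ[R] u₂) (v₁ ⊗ₜ[R] v₂) = ω u₁ v₁ * ω u₂ v₂) (T : B ⊗[R] B) :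
    T = ∑ i, ∑ j, ωh T (e i ⊗ₜ[R] e j) • (f i ⊗ₜ[R] f j) := by
  induction T using TensorProduct.induction_on with
  | zero => simp
  | tmul u v =>
    conv_lhs => rw [← e.sum_pairing_smul_dual hdual hnd u, ← e.sum_pairing_smul_dual hdual hnd v]
    simp only [hωh, sum_tmul, tmul_sum, smul_tmul_smul]
    exact Finset.sum_comm
  | add T T' hT hT' =>
    conv_lhs => rw [hT, hT']
    simp only [map_add, LinearMap.add_apply, add_smul, Finset.sum_add_distrib]

theorem Module.Basis.ext_of_pairing_tmul
    (hdual : ∀ i j, ω (f i) (e j) = if i = j then 1 else 0)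
    (hnd : ∀ u, (∀ v, ω u v = 0) → u = 0)
    (hωh : ∀ u₁ u₂ v₁ v₂, ωh (u₁ ⊗ₜ[R] u₂) (v₁ ⊗ₜ[R] v₂) = ω u₁ v₁ * ω u₂ v₂) {T T' : B ⊗[R] B}
    (h : ∀ u v, ωh T (u ⊗ₜ[R] v) = ωh T' (u ⊗ₜ[R] v)) : T = T' := by
  rw [e.eq_sum_pairing_smul_tmul hdual hnd hωh T, e.eq_sum_pairing_smul_tmul hdual hnd hωh T']
  simp only [h]

theorem Module.Basis.pairing_map_canonicalTensor
    (hdual : ∀ i j, ω (f i) (e j) = if i = j then 1 else 0)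
    (hωh : ∀ u₁ u₂ v₁ v₂, ωh (u₁ ⊗ₜ[R] u₂) (v₁ ⊗ₜ[R] v₂) = ω u₁ v₁ * ω u₂ v₂)
    (φ : B →ₗ[R] B) (u v : B) :
    ωh (map φ LinearMap.id (canonicalTensor R e f)) (u ⊗ₜ[R] v) = ω (φ v) u := by
  conv_rhs => rw [← e.sum_pairing_smul hdual v]
  simp [canonicalTensor, map_sum, hωh, mul_comm]

end CanonicalTensor

section QuadraticForm

variable {R B : Type*} [CommRing R] [AddCommGroup B] [Module R B]
  {ω : B →ₗ[R] B →ₗ[R] R} {dia : B →ₗ[R] B →ₗ[R] B}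

theorem pairing_mul_left_comm (hanti : ∀ u v, ω u v = - ω v u)
    (hinv : ∀ b₁ b₂ b₃, ω (dia b₁ b₂) b₃ = ω b₁ (dia b₂ b₃ - dia b₃ b₂)) (b u v : B) :
    ω u (dia b v) = ω (dia b u) v := by
  rw [hanti, hinv, hinv, ← neg_sub, map_neg, neg_neg]

theorem pairing_mul_sub_mul (hanti : ∀ u v, ω u v = - ω v u)
    (hinv : ∀ b₁ b₂ b₃, ω (dia b₁ b₂) b₃ = ω b₁ (dia b₂ b₃ - dia b₃ b₂)) (b u v : B) :
    ω (dia b v - dia v b) u = - ω b (dia u v) := by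
  rw [hanti, ← neg_sub, map_neg, neg_neg, ← hinv, hanti]

end QuadraticForm

section Interchange

variable {R A B : Type*} [CommRing R] [AddCommGroup A] [Module R A] [AddCommGroup B] [Module R B]

local notation "σ" => TensorProduct.tensorTensorTensorComm R A A B B
local notation "𝟙" => LinearMap.id

theorem map_map_tensorTensorTensorComm_tmul (f₁ f₂ : A →ₗ[R] A) (g₁ g₂ : B →ₗ[R] B)
    (X : A ⊗[R] A) (Y : B ⊗[R] B) :
    map (map f₁ g₁) (map f₂ g₂) (σ (X ⊗ₜ[R] Y)) = σ (map f₁ f₂ X ⊗ₜ[R] map g₁ g₂ Y) :=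
  (LinearMap.congr_fun (tensorTensorTensorComm_comp_map (R := R) f₁ f₂ g₁ g₂) (X ⊗ₜ[R] Y)).symm

theorem comm_tensorTensorTensorComm_tmul (X : A ⊗[R] A) (Y : B ⊗[R] B) :
    TensorProduct.comm R _ _ (σ (X ⊗ₜ[R] Y))
      = σ (TensorProduct.comm R A A X ⊗ₜ[R] TensorProduct.comm R B B Y) := by
  suffices (TensorProduct.comm R _ _).toLinearMap ∘ₗ (σ).toLinearMap
      = (σ).toLinearMap ∘ₗ map (TensorProduct.comm R A A) (TensorProduct.comm R B B) from
    LinearMap.congr_fun this (X ⊗ₜ[R] Y)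
  exact ext_fourfold' fun _ _ _ _ => rfl

theorem comm_map_of_comm_eq {r : A ⊗[R] A} (hr : TensorProduct.comm R A A r = r)
    (f g : A →ₗ[R] A) : TensorProduct.comm R A A (map f g r) = map g f r := by
  rw [← map_comm, hr]

theorem comm_map_of_comm_eq_neg {c : B ⊗[R] B} (hc : TensorProduct.comm R B B c = -c)
    (f g : B →ₗ[R] B) : TensorProduct.comm R B B (map f g c) = - map g f c := by
  rw [← map_comm, hc, map_neg]

theorem map_id_map_tensorTensorTensorComm_tmul (f : A →ₗ[R] A) (g : B →ₗ[R] B)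
    (X : A ⊗[R] A) (Y : B ⊗[R] B) :
    map 𝟙 (map f g) (σ (X ⊗ₜ[R] Y)) = σ (map 𝟙 f X ⊗ₜ[R] map 𝟙 g Y) := by
  rw [← map_id, map_map_tensorTensorTensorComm_tmul]

theorem map_map_id_tensorTensorTensorComm_tmul (f : A →ₗ[R] A) (g : B →ₗ[R] B)
    (X : A ⊗[R] A) (Y : B ⊗[R] B) :
    map (map f g) 𝟙 (σ (X ⊗ₜ[R] Y)) = σ (map f 𝟙 X ⊗ₜ[R] map g 𝟙 Y) := by
  rw [← map_id, map_map_tensorTensorTensorComm_tmul]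

theorem map_id_eq_sub_of_map_sub_id_eq {c : B ⊗[R] B} {Lb Rb : B →ₗ[R] B}
    (hL : map Lb 𝟙 c = map 𝟙 Lb c) (hR : map (Lb - Rb) 𝟙 c = map 𝟙 Rb c) :
    map Rb 𝟙 c = map 𝟙 Lb c - map 𝟙 Rb c := by
  rw [← hL, ← hR, map_sub_id, LinearMap.sub_apply, sub_sub_cancel]

theorem symmetrized_interchange_eq_coboundary {r : A ⊗[R] A}
    (hr : TensorProduct.comm R A A r = r) {c : B ⊗[R] B} (hc : TensorProduct.comm R B B c = -c)
    (La Ra : A →ₗ[R] A) {Lb Rb : B →ₗ[R] B}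
    (hL : map Lb 𝟙 c = map 𝟙 Lb c) (hR : map (Lb - Rb) 𝟙 c = map 𝟙 Rb c) :
    σ ((map 𝟙 (La + Ra) r - map La 𝟙 r) ⊗ₜ[R] map (Lb - Rb) 𝟙 c)
      + TensorProduct.comm R _ _ (σ ((map 𝟙 (La + Ra) r - map La 𝟙 r) ⊗ₜ[R] map (Lb - Rb) 𝟙 c))
    = map 𝟙 (map La Lb + map Ra Rb) (σ (r ⊗ₜ[R] c))
      - map (map La Lb + map Ra Rb) 𝟙 (σ (r ⊗ₜ[R] c)) := by
  have hRb := map_id_eq_sub_of_map_sub_id_eq hL hR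
  simp only [comm_tensorTensorTensorComm_tmul, map_sub, map_add, comm_map_of_comm_eq hr,
    comm_map_of_comm_eq_neg hc, map_add_left, map_add_right, LinearMap.add_apply,
    map_id_map_tensorTensorTensorComm_tmul, map_map_id_tensorTensorTensorComm_tmul, hR, hL, hRb,
    map_neg, add_tmul, tmul_sub, sub_tmul, tmul_neg]
  abel

theorem antisymmetrized_interchange_eq_coboundary {r : A ⊗[R] A}
    (hr : TensorProduct.comm R A A r = r) {c : B ⊗[R] B} (hc : TensorProduct.comm R B B c = -c)
    (La Ra : A →ₗ[R] A) {Lb Rb : B →ₗ[R] B}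
    (hL : map Lb 𝟙 c = map 𝟙 Lb c) (hR : map (Lb - Rb) 𝟙 c = map 𝟙 Rb c) :
    σ ((map La 𝟙 r + map 𝟙 (La - Ra) r) ⊗ₜ[R] map (Lb - Rb) 𝟙 c)
      - TensorProduct.comm R _ _ (σ ((map La 𝟙 r + map 𝟙 (La - Ra) r) ⊗ₜ[R] map (Lb - Rb) 𝟙 c))
    = map 𝟙 (map La Lb - map Ra Rb) (σ (r ⊗ₜ[R] c))
      + map (map La Lb - map Ra Rb) 𝟙 (σ (r ⊗ₜ[R] c)) := by
  have hRb := map_id_eq_sub_of_map_sub_id_eq hL hR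
  simp only [comm_tensorTensorTensorComm_tmul, map_sub, map_add, comm_map_of_comm_eq hr,
    comm_map_of_comm_eq_neg hc, map_id_sub, map_sub_id, LinearMap.sub_apply,
    map_id_map_tensorTensorTensorComm_tmul, map_map_id_tensorTensorTensorComm_tmul, hL, hRb,
    map_neg, add_tmul, tmul_sub, sub_tmul, tmul_neg]
  abel

end Interchange

theorem statement11_general (k A B : Type) [Field k]
    [AddCommGroup A] [Module k A]
    [AddCommGroup B] [Module k B]
    (ast circ : A →ₗ[k] A →ₗ[k] A)
    (r : A ⊗[k] A) (p : ℕ) (x y : Fin p → A)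
    (hr : r = ∑ i : Fin p, (x i) ⊗ₜ[k] (y i))
    (hsym : (TensorProduct.comm k A A) r = r)
    (ϑr : A →ₗ[k] A ⊗[k] A)
    (hϑr : ∀ a : A,
      ϑr a = TensorProduct.map (idm k A) (ast a + ast.flip a) r
        - TensorProduct.map (ast a) (idm k A) r)
    (θr : A →ₗ[k] A ⊗[k] A)
    (hθr : ∀ a : A,
      θr a = TensorProduct.map (circ a) (idm k A) r
        + TensorProduct.map (idm k A) (circ a - circ.flip a) r)
    (dia : B →ₗ[k] B →ₗ[k] B)
    (ω : B →ₗ[k] B →ₗ[k] k)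
    (hω₁ : ∀ b₁ b₂ : B, ω b₁ b₂ = - ω b₂ b₁)
    (hω₂ : ∀ b₁ : B, (∀ b₂ : B, ω b₁ b₂ = 0) → b₁ = 0)
    (hω₃ : ∀ b₁ b₂ b₃ : B, ω (dia b₁ b₂) b₃ = ω b₁ (dia b₂ b₃ - dia b₃ b₂))
    (n : ℕ) (e : Module.Basis (Fin n) k B) (f : Fin n → B)
    (hdual : ∀ i j : Fin n, ω (f i) (e j) = if i = j then 1 else 0)
    (ωh : B ⊗[k] B →ₗ[k] B ⊗[k] B →ₗ[k] k)
    (hωh : ∀ u₁ u₂ v₁ v₂ : B, ωh (u₁ ⊗ₜ[k] u₂) (v₁ ⊗ₜ[k] v₂) = ω u₁ v₁ * ω u₂ v₂)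
    (ν : B →ₗ[k] B ⊗[k] B)
    (hν : ∀ b₁ b₂ b₃ : B, ωh (ν b₁) (b₂ ⊗ₜ[k] b₃) = - ω b₁ (dia b₂ b₃))
    (m : A ⊗[k] B →ₗ[k] A ⊗[k] B →ₗ[k] A ⊗[k] B)
    (hm : ∀ (a₁ a₂ : A) (b₁ b₂ : B),
      m (a₁ ⊗ₜ[k] b₁) (a₂ ⊗ₜ[k] b₂)
        = (ast a₁ a₂) ⊗ₜ[k] (dia b₁ b₂) + (ast a₂ a₁) ⊗ₜ[k] (dia b₂ b₁))
    (br : A ⊗[k] B →ₗ[k] A ⊗[k] B →ₗ[k] A ⊗[k] B)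
    (hbr : ∀ (a₁ a₂ : A) (b₁ b₂ : B),
      br (a₁ ⊗ₜ[k] b₁) (a₂ ⊗ₜ[k] b₂)
        = (circ a₁ a₂) ⊗ₜ[k] (dia b₁ b₂) - (circ a₂ a₁) ⊗ₜ[k] (dia b₂ b₁))
    (Δ : A ⊗[k] B →ₗ[k] (A ⊗[k] B) ⊗[k] (A ⊗[k] B))
    (hΔ : ∀ (a : A) (b : B),
      Δ (a ⊗ₜ[k] b)
        = intch k A (B) ((ϑr a) ⊗ₜ[k] (ν b))
          + tau k (A ⊗[k] B) (intch k A (B) ((ϑr a) ⊗ₜ[k] (ν b))))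
    (δ : A ⊗[k] B →ₗ[k] (A ⊗[k] B) ⊗[k] (A ⊗[k] B))
    (hδ : ∀ (a : A) (b : B),
      δ (a ⊗ₜ[k] b)
        = intch k A (B) ((θr a) ⊗ₜ[k] (ν b))
          - tau k (A ⊗[k] B) (intch k A (B) ((θr a) ⊗ₜ[k] (ν b))))
    (rhat : (A ⊗[k] B) ⊗[k] (A ⊗[k] B))
    (hrhat : rhat = ∑ i : Fin p, ∑ j : Fin n,
      ((x i) ⊗ₜ[k] (e j : B)) ⊗ₜ[k] ((y i) ⊗ₜ[k] (f j)))
    :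
    (∀ (a : A) (b : B),
      Δ (a ⊗ₜ[k] b)
        = TensorProduct.map (idm k (A ⊗[k] B)) (m (a ⊗ₜ[k] b)) rhat
          - TensorProduct.map (m (a ⊗ₜ[k] b)) (idm k (A ⊗[k] B)) rhat) ∧
    (∀ (a : A) (b : B),
      δ (a ⊗ₜ[k] b)
        = TensorProduct.map (idm k (A ⊗[k] B)) (br (a ⊗ₜ[k] b)) rhat
          + TensorProduct.map (br (a ⊗ₜ[k] b)) (idm k (A ⊗[k] B)) rhat) := by
  set c := canonicalTensor k e f
  have hc : TensorProduct.comm k B B c = -c := e.comm_canonicalTensor hdual hω₁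
  have hL (b : B) : map (dia b) LinearMap.id c = map LinearMap.id (dia b) c :=
    e.map_canonicalTensor_eq_of_adjoint hdual hω₂ (pairing_mul_left_comm hω₁ hω₃ b)
  have hR (b : B) : map (dia b - dia.flip b) LinearMap.id c = map LinearMap.id (dia.flip b) c :=
    e.map_canonicalTensor_eq_of_adjoint hdual hω₂ fun u v => (hω₃ u b v).symm
  have hνc (b : B) : ν b = map (dia b - dia.flip b) LinearMap.id c :=
    e.ext_of_pairing_tmul hdual hω₂ hωh fun u v => by
      rw [hν, e.pairing_map_canonicalTensor hdual hωh, LinearMap.sub_apply, LinearMap.flip_apply,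
        pairing_mul_sub_mul hω₁ hω₃]
  have hrc : rhat = tensorTensorTensorComm k A A B B (r ⊗ₜ[k] c) := by
    simp only [hrhat, hr, c, canonicalTensor, sum_tmul, tmul_sum, map_sum,
      tensorTensorTensorComm_tmul]
    exact Finset.sum_comm
  have hm_map (a : A) (b : B) :
      m (a ⊗ₜ[k] b) = map (ast a) (dia b) + map (ast.flip a) (dia.flip b) :=
    TensorProduct.ext' fun _ _ => by simp [hm]
  have hbr_map (a : A) (b : B) :
      br (a ⊗ₜ[k] b) = map (circ a) (dia b) - map (circ.flip a) (dia.flip b) :=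
    TensorProduct.ext' fun _ _ => by simp [hbr]
  -- `idm`, `intch` and `tau` unfold to `LinearMap.id`, `tensorTensorTensorComm` and `comm`.
  refine ⟨fun a b => ?_, fun a b => ?_⟩
  · rw [hΔ, hϑr, hνc, hm_map, hrc]
    exact symmetrized_interchange_eq_coboundary hsym hc _ _ (hL b) (hR b)
  · rw [hδ, hθr, hνc, hbr_map, hrc]
    exact antisymmetrized_interchange_eq_coboundary hsym hc _ _ (hL b) (hR b)

theorem statement11 (k A B : Type) [Field k] [CharZero k]
    [AddCommGroup A] [Module k A] [FiniteDimensional k A]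
    [AddCommGroup B] [Module k B] [FiniteDimensional k B]
    (ast circ : A →ₗ[k] A →ₗ[k] A) (hA : IsPrePoisson ast circ)
    (r : A ⊗[k] A) (p : ℕ) (x y : Fin p → A)
    (hr : r = ∑ i : Fin p, (x i) ⊗ₜ[k] (y i))
    (hsym : (TensorProduct.comm k A A) r = r)
    (hZ : Zexp ast x y = 0) (hPL : PLexp circ x y = 0)
    (ϑr : A →ₗ[k] A ⊗[k] A)
    (hϑr : ∀ a : A,
      ϑr a = TensorProduct.map (idm k A) (ast a + ast.flip a) r
        - TensorProduct.map (ast a) (idm k A) r)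
    (θr : A →ₗ[k] A ⊗[k] A)
    (hθr : ∀ a : A,
      θr a = TensorProduct.map (circ a) (idm k A) r
        + TensorProduct.map (idm k A) (circ a - circ.flip a) r)
    (dia : B →ₗ[k] B →ₗ[k] B) (hdia : IsPerm dia)
    (ω : B →ₗ[k] B →ₗ[k] k)
    (hω₁ : ∀ b₁ b₂ : B, ω b₁ b₂ = - ω b₂ b₁)
    (hω₂ : ∀ b₁ : B, (∀ b₂ : B, ω b₁ b₂ = 0) → b₁ = 0)
    (hω₃ : ∀ b₁ b₂ b₃ : B, ω (dia b₁ b₂) b₃ = ω b₁ (dia b₂ b₃ - dia b₃ b₂))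
    (n : ℕ) (e : Module.Basis (Fin n) k B) (f : Fin n → B)
    (hdual : ∀ i j : Fin n, ω (f i) (e j) = if i = j then 1 else 0)
    (ωh : B ⊗[k] B →ₗ[k] B ⊗[k] B →ₗ[k] k)
    (hωh : ∀ u₁ u₂ v₁ v₂ : B, ωh (u₁ ⊗ₜ[k] u₂) (v₁ ⊗ₜ[k] v₂) = ω u₁ v₁ * ω u₂ v₂)
    (ν : B →ₗ[k] B ⊗[k] B)
    (hν : ∀ b₁ b₂ b₃ : B, ωh (ν b₁) (b₂ ⊗ₜ[k] b₃) = - ω b₁ (dia b₂ b₃))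
    (m : A ⊗[k] B →ₗ[k] A ⊗[k] B →ₗ[k] A ⊗[k] B)
    (hm : ∀ (a₁ a₂ : A) (b₁ b₂ : B),
      m (a₁ ⊗ₜ[k] b₁) (a₂ ⊗ₜ[k] b₂)
        = (ast a₁ a₂) ⊗ₜ[k] (dia b₁ b₂) + (ast a₂ a₁) ⊗ₜ[k] (dia b₂ b₁))
    (br : A ⊗[k] B →ₗ[k] A ⊗[k] B →ₗ[k] A ⊗[k] B)
    (hbr : ∀ (a₁ a₂ : A) (b₁ b₂ : B),
      br (a₁ ⊗ₜ[k] b₁) (a₂ ⊗ₜ[k] b₂)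
        = (circ a₁ a₂) ⊗ₜ[k] (dia b₁ b₂) - (circ a₂ a₁) ⊗ₜ[k] (dia b₂ b₁))
    (Δ : A ⊗[k] B →ₗ[k] (A ⊗[k] B) ⊗[k] (A ⊗[k] B))
    (hΔ : ∀ (a : A) (b : B),
      Δ (a ⊗ₜ[k] b)
        = intch k A (B) ((ϑr a) ⊗ₜ[k] (ν b))
          + tau k (A ⊗[k] B) (intch k A (B) ((ϑr a) ⊗ₜ[k] (ν b))))
    (δ : A ⊗[k] B →ₗ[k] (A ⊗[k] B) ⊗[k] (A ⊗[k] B))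
    (hδ : ∀ (a : A) (b : B),
      δ (a ⊗ₜ[k] b)
        = intch k A (B) ((θr a) ⊗ₜ[k] (ν b))
          - tau k (A ⊗[k] B) (intch k A (B) ((θr a) ⊗ₜ[k] (ν b))))
    (rhat : (A ⊗[k] B) ⊗[k] (A ⊗[k] B))
    (hrhat : rhat = ∑ i : Fin p, ∑ j : Fin n,
      ((x i) ⊗ₜ[k] (e j : B)) ⊗ₜ[k] ((y i) ⊗ₜ[k] (f j)))
    :
    (∀ (a : A) (b : B),
      Δ (a ⊗ₜ[k] b)
        = TensorProduct.map (idm k (A ⊗[k] B)) (m (a ⊗ₜ[k] b)) rhat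
          - TensorProduct.map (m (a ⊗ₜ[k] b)) (idm k (A ⊗[k] B)) rhat) ∧
    (∀ (a : A) (b : B),
      δ (a ⊗ₜ[k] b)
        = TensorProduct.map (idm k (A ⊗[k] B)) (br (a ⊗ₜ[k] b)) rhat
          + TensorProduct.map (br (a ⊗ₜ[k] b)) (idm k (A ⊗[k] B)) rhat) :=
  statement11_general k A B ast circ r p x y hr hsym ϑr hϑr θr hθr dia ω hω₁ hω₂ hω₃ n e f hdual ωh
    hωh ν hν m hm br hbr Δ hΔ δ hδ rhat hrhat
end
end

section
/- Let k be a field of characteristic zero, (A, ∗) a finite-dimensional Zinbiel algebra with a nondegenerate bilinear form ϖ, {e₁,…,e_n} a basis of A and {f₁,…,f_n} the dual basis with respect to ϖ (i.e. ϖ(fᵢ, eⱼ) = δ_{ij}), and r = Σᵢ eᵢ ⊗ fᵢ ∈ A ⊗ A. Then r is a symmetric solution of the Zinbiel Yang–Baxter equation in (A, ∗) if and only if (A, ∗, ϖ) is a quasi-Frobenius Zinbiel algebra. -/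
open TensorProduct

noncomputable section

/-! Pair tensors with `A` factorwise through `ϖ`. Since `(e, f)` are dual bases, pairing with
`f p ⊗ f q` (resp. `f p ⊗ f q ⊗ f l`) is a coordinate functional of the product basis, so these
pairings separate tensors. Pairing `r` with `a ⊗ b` gives `ϖ b a`, hence `τ r = r` exactly when
`ϖ` is symmetric. For symmetric `ϖ` the expansions `a = ∑ ϖ(a, fᵢ) eᵢ = ∑ ϖ(a, eᵢ) fᵢ` contract
each of the eight double sums of `Z_r` to a single value of `ϖ`, and pairing `Z_r` with `a ⊗ b ⊗ c`
gives `ϖ(c, a∗b + b∗a) − ϖ(b, a∗c) − ϖ(a, b∗c)`, the defect of the quasi-Frobenius identity. -/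

theorem Module.Basis.dualDistrib_coord_tmul_coord {R M N ι κ : Type*} [CommSemiring R]
    [AddCommMonoid M] [Module R M] [AddCommMonoid N] [Module R N]
    (b : Module.Basis ι R M) (c : Module.Basis κ R N) (i : ι) (j : κ) :
    dualDistrib R M N (b.coord i ⊗ₜ c.coord j) = (b.tensorProduct c).coord (i, j) :=
  TensorProduct.ext' fun m n => by simpa using mul_comm _ _

namespace ZinbielYangBaxter

section Pairing

variable {k A : Type*} [Field k] [AddCommGroup A] [Module k A]

def pairing₂ (ϖ : A →ₗ[k] A →ₗ[k] k) (a b : A) : Module.Dual k (A ⊗[k] A) :=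
  dualDistrib k A A (ϖ a ⊗ₜ ϖ b)

def pairing₃ (ϖ : A →ₗ[k] A →ₗ[k] k) (a b c : A) : Module.Dual k ((A ⊗[k] A) ⊗[k] A) :=
  dualDistrib k (A ⊗[k] A) A (pairing₂ ϖ a b ⊗ₜ ϖ c)

@[simp] lemma pairing₂_tmul (ϖ : A →ₗ[k] A →ₗ[k] k) (a b x y : A) :
    pairing₂ ϖ a b (x ⊗ₜ y) = ϖ a x * ϖ b y := rfl

@[simp] lemma pairing₃_tmul (ϖ : A →ₗ[k] A →ₗ[k] k) (a b c x y z : A) :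
    pairing₃ ϖ a b c ((x ⊗ₜ y) ⊗ₜ z) = ϖ a x * ϖ b y * ϖ c z := rfl

lemma pairing₂_comm (ϖ : A →ₗ[k] A →ₗ[k] k) (a b : A) (t : A ⊗[k] A) :
    pairing₂ ϖ a b (TensorProduct.comm k A A t) = pairing₂ ϖ b a t := by
  induction t using TensorProduct.induction_on with
  | zero => simp
  | tmul x y => simp [mul_comm]
  | add s t hs ht => simp only [map_add, hs, ht]

lemma sum_sum_mul_mul_apply (ϖ β : A →ₗ[k] A →ₗ[k] k) {ι κ : Type*} [Fintype ι] [Fintype κ]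
    {u v : ι → A} {u' v' : κ → A} (hu : ∀ a, ∑ i, ϖ a (v i) • u i = a)
    (hu' : ∀ a, ∑ j, ϖ a (v' j) • u' j = a) (a b : A) :
    ∑ i, ∑ j, ϖ a (v i) * ϖ b (v' j) * β (u i) (u' j) = β a b := by
  conv_rhs => rw [← hu a, ← hu' b]
  simp only [map_sum, map_smul, LinearMap.sum_apply, LinearMap.smul_apply, smul_eq_mul,
    Finset.mul_sum, mul_assoc]
  rw [Finset.sum_comm]
  exact Finset.sum_congr rfl fun j _ => Finset.sum_congr rfl fun i _ => mul_left_comm _ _ _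

end Pairing

section DualBases

variable {k A ι : Type*} [Field k] [AddCommGroup A] [Module k A] [DecidableEq ι]
  {ϖ : A →ₗ[k] A →ₗ[k] k} {e : Module.Basis ι k A} {f : ι → A}

lemma apply_eq_coord (hdual : ∀ i j, ϖ (f i) (e j) = if i = j then 1 else 0) (i : ι) :
    ϖ (f i) = e.coord i :=
  e.ext fun j => by simp [hdual, Finsupp.single_apply, eq_comm]

lemma sum_dual_apply_smul [Fintype ι] (hdual : ∀ i j, ϖ (f i) (e j) = if i = j then 1 else 0)
    (a : A) : ∑ i, ϖ (f i) a • e i = a := by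
  simp_rw [apply_eq_coord hdual, Module.Basis.coord_apply]
  exact e.sum_repr a

lemma sum_apply_basis_smul_dual [Fintype ι]
    (hdual : ∀ i j, ϖ (f i) (e j) = if i = j then 1 else 0)
    (hnd : ∀ a : A, (∀ a' : A, ϖ a a' = 0) → a = 0) (a : A) :
    ∑ i, ϖ a (e i) • f i = a := by
  refine sub_eq_zero.mp (hnd _ fun a' => ?_)
  suffices ϖ (∑ i, ϖ a (e i) • f i - a) = 0 by rw [this, LinearMap.zero_apply]
  exact e.ext fun j => by simp [hdual]

lemma pairing₂_dual_eq_coord (hdual : ∀ i j, ϖ (f i) (e j) = if i = j then 1 else 0)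
    (p q : ι) :
    pairing₂ ϖ (f p) (f q) = (e.tensorProduct e).coord (p, q) := by
  rw [pairing₂, apply_eq_coord hdual, apply_eq_coord hdual,
    Module.Basis.dualDistrib_coord_tmul_coord]

lemma pairing₃_dual_eq_coord (hdual : ∀ i j, ϖ (f i) (e j) = if i = j then 1 else 0)
    (p q l : ι) :
    pairing₃ ϖ (f p) (f q) (f l) = ((e.tensorProduct e).tensorProduct e).coord ((p, q), l) := by
  rw [pairing₃, pairing₂_dual_eq_coord hdual, apply_eq_coord hdual,
    Module.Basis.dualDistrib_coord_tmul_coord]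

lemma ext_pairing₂ (hdual : ∀ i j, ϖ (f i) (e j) = if i = j then 1 else 0) {s t : A ⊗[k] A}
    (h : ∀ a b, pairing₂ ϖ a b s = pairing₂ ϖ a b t) : s = t :=
  (e.tensorProduct e).ext_elem fun ⟨p, q⟩ => by
    simpa only [pairing₂_dual_eq_coord hdual, Module.Basis.coord_apply] using h (f p) (f q)

lemma ext_pairing₃ (hdual : ∀ i j, ϖ (f i) (e j) = if i = j then 1 else 0)
    {s t : (A ⊗[k] A) ⊗[k] A} (h : ∀ a b c, pairing₃ ϖ a b c s = pairing₃ ϖ a b c t) : s = t :=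
  ((e.tensorProduct e).tensorProduct e).ext_elem fun ⟨⟨p, q⟩, l⟩ => by
    simpa only [pairing₃_dual_eq_coord hdual, Module.Basis.coord_apply] using h (f p) (f q) (f l)

lemma pairing₂_sum_tmul [Fintype ι] (hdual : ∀ i j, ϖ (f i) (e j) = if i = j then 1 else 0)
    (hnd : ∀ a : A, (∀ a' : A, ϖ a a' = 0) → a = 0) (a b : A) :
    pairing₂ ϖ a b (∑ i, e i ⊗ₜ f i) = ϖ b a := by
  conv_rhs => rw [← sum_apply_basis_smul_dual hdual hnd a]
  simp [mul_comm]

lemma comm_sum_tmul_eq_self_iff [Fintype ι]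
    (hdual : ∀ i j, ϖ (f i) (e j) = if i = j then 1 else 0)
    (hnd : ∀ a : A, (∀ a' : A, ϖ a a' = 0) → a = 0) :
    TensorProduct.comm k A A (∑ i, e i ⊗ₜ f i) = ∑ i, e i ⊗ₜ f i ↔ ∀ a b, ϖ a b = ϖ b a := by
  have key (a b : A) : pairing₂ ϖ a b (TensorProduct.comm k A A (∑ i, e i ⊗ₜ f i)) = ϖ a b := by
    rw [pairing₂_comm, pairing₂_sum_tmul hdual hnd]
  constructor
  · intro h a b
    rw [← key, h, pairing₂_sum_tmul hdual hnd]
  · intro h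
    exact ext_pairing₂ hdual fun a b => by rw [key, pairing₂_sum_tmul hdual hnd, h]

end DualBases

section ZinbielYangBaxterEquation

variable {k A : Type} [Field k] [AddCommGroup A] [Module k A] (ϖ : A →ₗ[k] A →ₗ[k] k)
  (ast : A →ₗ[k] A →ₗ[k] A) {n : ℕ}

lemma pairing₃_Zexp {x y : Fin n → A} (hx : ∀ a, ∑ i, ϖ a (y i) • x i = a)
    (hy : ∀ a, ∑ i, ϖ a (x i) • y i = a) (a b c : A) :
    pairing₃ ϖ a b c (Zexp ast x y)
      = ϖ c (ast a b) + ϖ c (ast b a) - ϖ b (ast a c) - ϖ a (ast b c) := by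
  simp only [Zexp, map_sum, map_add, map_sub, pairing₃_tmul, Finset.sum_add_distrib,
    Finset.sum_sub_distrib]
  -- `ring_nf` does not normalise inside `∑`, so `simp` first sorts the factors of each summand.
  linear_combination
    (norm := (simp only [LinearMap.compr₂_apply, mul_comm, mul_left_comm]; ring_nf))
    sum_sum_mul_mul_apply ϖ (ast.compr₂ (ϖ a)) hx hx c b
      + sum_sum_mul_mul_apply ϖ (ast.compr₂ (ϖ b)) hx hx c a
      + sum_sum_mul_mul_apply ϖ (ast.compr₂ (ϖ c)) hy hy a b
      + sum_sum_mul_mul_apply ϖ (ast.compr₂ (ϖ c)) hy hy b a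
      - sum_sum_mul_mul_apply ϖ (ast.compr₂ (ϖ b)) hy hx a c
      - sum_sum_mul_mul_apply ϖ (ast.compr₂ (ϖ b)) hx hy c a
      - sum_sum_mul_mul_apply ϖ (ast.compr₂ (ϖ a)) hx hy c b
      - sum_sum_mul_mul_apply ϖ (ast.compr₂ (ϖ a)) hy hx b c

variable {ϖ} {e : Module.Basis (Fin n) k A} {f : Fin n → A}

lemma Zexp_eq_zero_iff (hdual : ∀ i j, ϖ (f i) (e j) = if i = j then 1 else 0)
    (hnd : ∀ a : A, (∀ a' : A, ϖ a a' = 0) → a = 0) (hsymm : ∀ a b, ϖ a b = ϖ b a) :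
    Zexp ast e f = 0 ↔ ∀ a₁ a₂ a₃ : A,
      ϖ (ast a₁ a₂ + ast a₂ a₁) a₃ = ϖ a₁ (ast a₂ a₃) + ϖ a₂ (ast a₁ a₃) := by
  have hx (a : A) : ∑ i, ϖ a (f i) • e i = a := by
    simpa only [hsymm a] using sum_dual_apply_smul hdual a
  have defect (a b c : A) : pairing₃ ϖ a b c (Zexp ast e f)
      = ϖ (ast a b + ast b a) c - ϖ a (ast b c) - ϖ b (ast a c) := by
    rw [pairing₃_Zexp ϖ ast hx (sum_apply_basis_smul_dual hdual hnd), map_add,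
      LinearMap.add_apply, hsymm (ast a b), hsymm (ast b a)]
    ring
  constructor
  · intro h a b c
    have := defect a b c
    rw [h, map_zero] at this
    linear_combination -this
  · intro h
    exact ext_pairing₃ hdual fun a b c => by rw [defect, h, map_zero]; ring

end ZinbielYangBaxterEquation

end ZinbielYangBaxter

theorem statement13_general (k A : Type) [Field k]
    [AddCommGroup A] [Module k A]
    (ast : A →ₗ[k] A →ₗ[k] A)
    (ϖ : A →ₗ[k] A →ₗ[k] k)
    (hnd : ∀ a : A, (∀ a' : A, ϖ a a' = 0) → a = 0)
    (n : ℕ) (e : Module.Basis (Fin n) k A) (f : Fin n → A)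
    (hdual : ∀ i j : Fin n, ϖ (f i) (e j) = if i = j then 1 else 0)
    (r : A ⊗[k] A) (hr : r = ∑ i : Fin n, (e i : A) ⊗ₜ[k] (f i)) :
    ((TensorProduct.comm k A A) r = r ∧ Zexp ast (fun i => (e i : A)) f = 0)
      ↔ ((∀ a₁ a₂ : A, ϖ a₁ a₂ = ϖ a₂ a₁) ∧
       (∀ a₁ a₂ a₃ : A,
         ϖ (ast a₁ a₂ + ast a₂ a₁) a₃ = ϖ a₁ (ast a₂ a₃) + ϖ a₂ (ast a₁ a₃))) := by
  subst hr
  rw [ZinbielYangBaxter.comm_sum_tmul_eq_self_iff hdual hnd]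
  exact and_congr_right (ZinbielYangBaxter.Zexp_eq_zero_iff ast hdual hnd)

theorem statement13 (k A : Type) [Field k] [CharZero k]
    [AddCommGroup A] [Module k A] [FiniteDimensional k A]
    (ast : A →ₗ[k] A →ₗ[k] A) (hast : IsZinbiel ast)
    (ϖ : A →ₗ[k] A →ₗ[k] k)
    (hnd : ∀ a : A, (∀ a' : A, ϖ a a' = 0) → a = 0)
    (n : ℕ) (e : Module.Basis (Fin n) k A) (f : Fin n → A)
    (hdual : ∀ i j : Fin n, ϖ (f i) (e j) = if i = j then 1 else 0)
    (r : A ⊗[k] A) (hr : r = ∑ i : Fin n, (e i : A) ⊗ₜ[k] (f i)) :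
    ((TensorProduct.comm k A A) r = r ∧ Zexp ast (fun i => (e i : A)) f = 0)
      ↔ ((∀ a₁ a₂ : A, ϖ a₁ a₂ = ϖ a₂ a₁) ∧
       (∀ a₁ a₂ a₃ : A,
         ϖ (ast a₁ a₂ + ast a₂ a₁) a₃ = ϖ a₁ (ast a₂ a₃) + ϖ a₂ (ast a₁ a₃))) :=
  statement13_general k A ast ϖ hnd n e f hdual r hr
end
end

section
/- Let k be a field of characteristic zero, (A, ∗, ϖ) a quasi-Frobenius Zinbiel algebra, (B, ⋄, ω) a quadratic perm algebra, and (A ⊗ B, ·) the induced commutative associative algebra. Define the bilinear form 𝔅 on A ⊗ B by 𝔅(a₁ ⊗ b₁, a₂ ⊗ b₂) = ϖ(a₁, a₂)·ω(b₁, b₂). Then 𝔅 is an antisymmetric nondegenerate bilinear form satisfying the Connes cocycle condition 𝔅(u₁·u₂, u₃) + 𝔅(u₂·u₃, u₁) + 𝔅(u₃·u₁, u₂) = 0 for all u₁, u₂, u₃ ∈ A ⊗ B. -/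
open TensorProduct

noncomputable section

/-!
On pure tensors `𝔅` is the product of the symmetric form `ϖ` and the antisymmetric form `ω`,
so it is antisymmetric. For nondegeneracy write `u = ∑ cᵢ ⊗ eᵢ` in a basis `e` of `B`: pairing
with `a' ⊗ b'` shows that `∑ ϖ(cᵢ, a') eᵢ` is `ω`-orthogonal to `B`, hence zero, so every `cᵢ`
is `ϖ`-orthogonal to `A`. The cocycle identity is trilinear, so it suffices to check it on pure
tensors. There invariance of `ω` makes `ω(bᵢ ⋄ bⱼ, bₖ)` antisymmetric in `j, k` and leaves only
two independent values among the six, and the coefficient of each is a sum of instances of the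
quasi-Frobenius identity.
-/

section TensorForm

variable {R M M' N N' : Type*} [CommRing R] [AddCommGroup M] [Module R M]
  [AddCommGroup M'] [Module R M'] [AddCommGroup N] [Module R N] [AddCommGroup N'] [Module R N']

theorem apply_eq_neg_apply_of_symm_tmul_antisymm {β₁ : M →ₗ[R] M →ₗ[R] R}
    {β₂ : N →ₗ[R] N →ₗ[R] R} (h₁ : ∀ a a', β₁ a a' = β₁ a' a) (h₂ : ∀ b b', β₂ b b' = -β₂ b' b)
    {Φ : M ⊗[R] N →ₗ[R] M ⊗[R] N →ₗ[R] R}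
    (hΦ : ∀ a a' b b', Φ (a ⊗ₜ b) (a' ⊗ₜ b') = β₁ a a' * β₂ b b') (u v : M ⊗[R] N) :
    Φ u v = -Φ v u := by
  have : Φ = -Φ.flip := TensorProduct.ext' fun a b => TensorProduct.ext' fun a' b' => by
    simp [hΦ, h₁ a, h₂ b]
  exact congr($this u v)

theorem LinearMap.SeparatingLeft.tmul [Module.Free R N] {β₁ : M →ₗ[R] M' →ₗ[R] R}
    {β₂ : N →ₗ[R] N' →ₗ[R] R} (h₁ : β₁.SeparatingLeft) (h₂ : β₂.SeparatingLeft)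
    {Φ : M ⊗[R] N →ₗ[R] M' ⊗[R] N' →ₗ[R] R}
    (hΦ : ∀ a a' b b', Φ (a ⊗ₜ b) (a' ⊗ₜ b') = β₁ a a' * β₂ b b') : Φ.SeparatingLeft := by
  intro u hu
  let e := Module.Free.chooseBasis R N
  obtain ⟨c, rfl⟩ := (TensorProduct.equivFinsuppOfBasisRight e).symm.surjective u
  suffices c = 0 by simp [this]
  ext i
  refine h₁ _ fun a' => ?_
  have hsum : Finsupp.linearCombination R e (Finsupp.mapRange.linearMap (β₁.flip a') c) = 0 :=
    h₂ _ fun b' => by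
      rw [Finsupp.linearCombination_apply, Finsupp.mapRange.linearMap_apply,
        Finsupp.sum_mapRange_index fun i => zero_smul R (e i)]
      simpa [equivFinsuppOfBasisRight_symm_apply, Finsupp.sum, map_sum, hΦ, mul_comm]
        using hu (a' ⊗ₜ b')
  simpa using congr($(e.linearIndependent.finsuppLinearCombination_injective
    (hsum.trans (map_zero _).symm)) i)

end TensorForm

section ConnesCocycle

variable {R A B : Type*} [CommRing R] [AddCommGroup A] [Module R A] [AddCommGroup B] [Module R B]
  {ast : A →ₗ[R] A →ₗ[R] A} {ϖ : A →ₗ[R] A →ₗ[R] R} {dia : B →ₗ[R] B →ₗ[R] B}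
  {ω : B →ₗ[R] B →ₗ[R] R}

theorem quasiFrobenius_rotate (hϖsym : ∀ a₁ a₂ : A, ϖ a₁ a₂ = ϖ a₂ a₁)
    (hϖcoc : ∀ a₁ a₂ a₃ : A,
      ϖ (ast a₁ a₂ + ast a₂ a₁) a₃ = ϖ a₁ (ast a₂ a₃) + ϖ a₂ (ast a₁ a₃)) (a₁ a₂ a₃ : A) :
    ϖ (ast a₁ a₂) a₃ + ϖ (ast a₂ a₁) a₃ = ϖ (ast a₂ a₃) a₁ + ϖ (ast a₁ a₃) a₂ := by
  simpa [hϖsym a₁, hϖsym a₂] using hϖcoc a₁ a₂ a₃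

theorem invariant_form_swap
    (hω₃ : ∀ b₁ b₂ b₃ : B, ω (dia b₁ b₂) b₃ = ω b₁ (dia b₂ b₃ - dia b₃ b₂)) (b₁ b₂ b₃ : B) :
    ω (dia b₁ b₂) b₃ = -ω (dia b₁ b₃) b₂ := by
  rw [hω₃, hω₃, ← map_neg, neg_sub]

theorem invariant_form_rotate (hω₁ : ∀ b₁ b₂ : B, ω b₁ b₂ = -ω b₂ b₁)
    (hω₃ : ∀ b₁ b₂ b₃ : B, ω (dia b₁ b₂) b₃ = ω b₁ (dia b₂ b₃ - dia b₃ b₂)) (b₁ b₂ b₃ : B) :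
    ω (dia b₁ b₂) b₃ = ω (dia b₃ b₂) b₁ - ω (dia b₂ b₃) b₁ := by
  rw [hω₃, map_sub, hω₁ b₁, hω₁ b₁]
  ring

theorem connes_cocycle_tmul (hϖsym : ∀ a₁ a₂ : A, ϖ a₁ a₂ = ϖ a₂ a₁)
    (hϖcoc : ∀ a₁ a₂ a₃ : A,
      ϖ (ast a₁ a₂ + ast a₂ a₁) a₃ = ϖ a₁ (ast a₂ a₃) + ϖ a₂ (ast a₁ a₃))
    (hω₁ : ∀ b₁ b₂ : B, ω b₁ b₂ = -ω b₂ b₁)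
    (hω₃ : ∀ b₁ b₂ b₃ : B, ω (dia b₁ b₂) b₃ = ω b₁ (dia b₂ b₃ - dia b₃ b₂))
    (a₁ a₂ a₃ : A) (b₁ b₂ b₃ : B) :
    (ϖ (ast a₁ a₂) a₃ * ω (dia b₁ b₂) b₃ + ϖ (ast a₂ a₁) a₃ * ω (dia b₂ b₁) b₃)
      + (ϖ (ast a₂ a₃) a₁ * ω (dia b₂ b₃) b₁ + ϖ (ast a₃ a₂) a₁ * ω (dia b₃ b₂) b₁)
      + (ϖ (ast a₃ a₁) a₂ * ω (dia b₃ b₁) b₂ + ϖ (ast a₁ a₃) a₂ * ω (dia b₁ b₃) b₂) = 0 := by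
  have Z := quasiFrobenius_rotate hϖsym hϖcoc
  have S := invariant_form_swap hω₃
  rw [S b₂ b₃, S b₃ b₂, invariant_form_rotate hω₁ hω₃ b₂ b₁ b₃, S b₁ b₃]
  linear_combination ω (dia b₁ b₂) b₃ * Z a₁ a₂ a₃
    + ω (dia b₃ b₁) b₂ * (Z a₃ a₁ a₂ + Z a₂ a₁ a₃)

theorem connes_cocycle (hϖsym : ∀ a₁ a₂ : A, ϖ a₁ a₂ = ϖ a₂ a₁)
    (hϖcoc : ∀ a₁ a₂ a₃ : A,
      ϖ (ast a₁ a₂ + ast a₂ a₁) a₃ = ϖ a₁ (ast a₂ a₃) + ϖ a₂ (ast a₁ a₃))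
    (hω₁ : ∀ b₁ b₂ : B, ω b₁ b₂ = -ω b₂ b₁)
    (hω₃ : ∀ b₁ b₂ b₃ : B, ω (dia b₁ b₂) b₃ = ω b₁ (dia b₂ b₃ - dia b₃ b₂))
    {m : A ⊗[R] B →ₗ[R] A ⊗[R] B →ₗ[R] A ⊗[R] B}
    (hm : ∀ (a₁ a₂ : A) (b₁ b₂ : B),
      m (a₁ ⊗ₜ b₁) (a₂ ⊗ₜ b₂) = ast a₁ a₂ ⊗ₜ dia b₁ b₂ + ast a₂ a₁ ⊗ₜ dia b₂ b₁)
    {Bf : A ⊗[R] B →ₗ[R] A ⊗[R] B →ₗ[R] R}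
    (hBf : ∀ (a₁ a₂ : A) (b₁ b₂ : B), Bf (a₁ ⊗ₜ b₁) (a₂ ⊗ₜ b₂) = ϖ a₁ a₂ * ω b₁ b₂)
    (u₁ u₂ u₃ : A ⊗[R] B) :
    Bf (m u₁ u₂) u₃ + Bf (m u₂ u₃) u₁ + Bf (m u₃ u₁) u₂ = 0 := by
  induction u₁ using TensorProduct.induction_on with
  | zero => simp
  | add x y hx hy => simp only [map_add, LinearMap.add_apply]; linear_combination hx + hy
  | tmul a₁ b₁ =>
  induction u₂ using TensorProduct.induction_on with
  | zero => simp
  | add x y hx hy => simp only [map_add, LinearMap.add_apply]; linear_combination hx + hy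
  | tmul a₂ b₂ =>
  induction u₃ using TensorProduct.induction_on with
  | zero => simp
  | add x y hx hy => simp only [map_add, LinearMap.add_apply]; linear_combination hx + hy
  | tmul a₃ b₃ =>
    simp only [hm, map_add, LinearMap.add_apply, hBf]
    exact connes_cocycle_tmul hϖsym hϖcoc hω₁ hω₃ a₁ a₂ a₃ b₁ b₂ b₃

end ConnesCocycle

theorem statement14_general (k A B : Type) [Field k]
    [AddCommGroup A] [Module k A]
    [AddCommGroup B] [Module k B]
    (ast : A →ₗ[k] A →ₗ[k] A)
    (ϖ : A →ₗ[k] A →ₗ[k] k)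
    (hϖsym : ∀ a₁ a₂ : A, ϖ a₁ a₂ = ϖ a₂ a₁)
    (hϖnd : ∀ a : A, (∀ a' : A, ϖ a a' = 0) → a = 0)
    (hϖcoc : ∀ a₁ a₂ a₃ : A,
      ϖ (ast a₁ a₂ + ast a₂ a₁) a₃ = ϖ a₁ (ast a₂ a₃) + ϖ a₂ (ast a₁ a₃))
    (dia : B →ₗ[k] B →ₗ[k] B)
    (ω : B →ₗ[k] B →ₗ[k] k)
    (hω₁ : ∀ b₁ b₂ : B, ω b₁ b₂ = - ω b₂ b₁)
    (hω₂ : ∀ b₁ : B, (∀ b₂ : B, ω b₁ b₂ = 0) → b₁ = 0)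
    (hω₃ : ∀ b₁ b₂ b₃ : B, ω (dia b₁ b₂) b₃ = ω b₁ (dia b₂ b₃ - dia b₃ b₂))
    (m : A ⊗[k] B →ₗ[k] A ⊗[k] B →ₗ[k] A ⊗[k] B)
    (hm : ∀ (a₁ a₂ : A) (b₁ b₂ : B),
      m (a₁ ⊗ₜ[k] b₁) (a₂ ⊗ₜ[k] b₂)
        = (ast a₁ a₂) ⊗ₜ[k] (dia b₁ b₂) + (ast a₂ a₁) ⊗ₜ[k] (dia b₂ b₁))
    (Bf : A ⊗[k] B →ₗ[k] A ⊗[k] B →ₗ[k] k)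
    (hBf : ∀ (a₁ a₂ : A) (b₁ b₂ : B),
      Bf (a₁ ⊗ₜ[k] b₁) (a₂ ⊗ₜ[k] b₂) = ϖ a₁ a₂ * ω b₁ b₂)
    :
    (∀ u v : A ⊗[k] B, Bf u v = - Bf v u) ∧
    (∀ u : A ⊗[k] B, (∀ v : A ⊗[k] B, Bf u v = 0) → u = 0) ∧
    (∀ u₁ u₂ u₃ : A ⊗[k] B,
      Bf (m u₁ u₂) u₃ + Bf (m u₂ u₃) u₁ + Bf (m u₃ u₁) u₂ = 0) :=
  ⟨apply_eq_neg_apply_of_symm_tmul_antisymm hϖsym hω₁ hBf,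
    LinearMap.SeparatingLeft.tmul hϖnd hω₂ hBf,
    connes_cocycle hϖsym hϖcoc hω₁ hω₃ hm hBf⟩

theorem statement14 (k A B : Type) [Field k] [CharZero k]
    [AddCommGroup A] [Module k A] [FiniteDimensional k A]
    [AddCommGroup B] [Module k B] [FiniteDimensional k B]
    (ast : A →ₗ[k] A →ₗ[k] A) (hast : IsZinbiel ast)
    (ϖ : A →ₗ[k] A →ₗ[k] k)
    (hϖsym : ∀ a₁ a₂ : A, ϖ a₁ a₂ = ϖ a₂ a₁)
    (hϖnd : ∀ a : A, (∀ a' : A, ϖ a a' = 0) → a = 0)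
    (hϖcoc : ∀ a₁ a₂ a₃ : A,
      ϖ (ast a₁ a₂ + ast a₂ a₁) a₃ = ϖ a₁ (ast a₂ a₃) + ϖ a₂ (ast a₁ a₃))
    (dia : B →ₗ[k] B →ₗ[k] B) (hdia : IsPerm dia)
    (ω : B →ₗ[k] B →ₗ[k] k)
    (hω₁ : ∀ b₁ b₂ : B, ω b₁ b₂ = - ω b₂ b₁)
    (hω₂ : ∀ b₁ : B, (∀ b₂ : B, ω b₁ b₂ = 0) → b₁ = 0)
    (hω₃ : ∀ b₁ b₂ b₃ : B, ω (dia b₁ b₂) b₃ = ω b₁ (dia b₂ b₃ - dia b₃ b₂))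
    (m : A ⊗[k] B →ₗ[k] A ⊗[k] B →ₗ[k] A ⊗[k] B)
    (hm : ∀ (a₁ a₂ : A) (b₁ b₂ : B),
      m (a₁ ⊗ₜ[k] b₁) (a₂ ⊗ₜ[k] b₂)
        = (ast a₁ a₂) ⊗ₜ[k] (dia b₁ b₂) + (ast a₂ a₁) ⊗ₜ[k] (dia b₂ b₁))
    (Bf : A ⊗[k] B →ₗ[k] A ⊗[k] B →ₗ[k] k)
    (hBf : ∀ (a₁ a₂ : A) (b₁ b₂ : B),
      Bf (a₁ ⊗ₜ[k] b₁) (a₂ ⊗ₜ[k] b₂) = ϖ a₁ a₂ * ω b₁ b₂)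
    :
    (∀ u v : A ⊗[k] B, Bf u v = - Bf v u) ∧
    (∀ u : A ⊗[k] B, (∀ v : A ⊗[k] B, Bf u v = 0) → u = 0) ∧
    (∀ u₁ u₂ u₃ : A ⊗[k] B,
      Bf (m u₁ u₂) u₃ + Bf (m u₂ u₃) u₁ + Bf (m u₃ u₁) u₂ = 0) :=
  statement14_general k A B ast ϖ hϖsym hϖnd hϖcoc dia ω hω₁ hω₂ hω₃ m hm Bf hBf
end
end
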